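/- arXiv:2005.03335 — 7 statements merged into one kernel-verified Lean document; each statement's English description precedes it below -/
import Mathlib

section
/- If T is a tree of order n, then the dissociation number of T is at least 2n/3. -/
/-- `F` is a dissociation set of `G`: the induced subgraph `G[F]` has maximum degree at most 1. -/
def IsDissocSet {V : Type*} (G : SimpleGraph V) (F : Finset V) : Prop :=
  ∀ v ∈ F, ∀ u ∈ F, ∀ w ∈ F, G.Adj v u → G.Adj v w → u = w

/-- The dissociation number of `G`. -/
noncomputable def dissocNum {V : Type*} [Fintype V] (G : SimpleGraph V) : ℕ :=
  sSup {n | ∃ F : Finset V, IsDissocSet G F ∧ F.card = n}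

/-- `F` is a maximum dissociation set of `G`. -/
def IsMaxDissocSet {V : Type*} [Fintype V] (G : SimpleGraph V) (F : Finset V) : Prop :=
  IsDissocSet G F ∧ F.card = dissocNum G

/-- The number of maximum dissociation sets of `G`. -/
noncomputable def numMaxDissoc {V : Type*} [Fintype V] (G : SimpleGraph V) : ℕ :=
  {F : Finset V | IsMaxDissocSet G F}.ncard

/-- `G` is subcubic: every vertex has degree at most 3. -/
def Subcubic {V : Type*} (G : SimpleGraph V) : Prop :=
  ∀ v : V, (G.neighborSet v).ncard ≤ 3

section Aux

open SimpleGraph Finset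

variable {V : Type*}

lemma aux_bddAbove [Fintype V] (G : SimpleGraph V) :
    BddAbove {n | ∃ F : Finset V, IsDissocSet G F ∧ F.card = n} := by
  refine ⟨Fintype.card V, ?_⟩
  rintro n ⟨F, _, rfl⟩
  exact F.card_le_univ

lemma le_dissocNum [Fintype V] {G : SimpleGraph V} {F : Finset V} (h : IsDissocSet G F) :
    F.card ≤ dissocNum G :=
  le_csSup (aux_bddAbove G) ⟨F, h, rfl⟩

lemma exists_max_dissoc [Fintype V] (G : SimpleGraph V) :
    ∃ F : Finset V, IsDissocSet G F ∧ F.card = dissocNum G := by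
  have hne : {n | ∃ F : Finset V, IsDissocSet G F ∧ F.card = n}.Nonempty :=
    ⟨0, ∅, by intro v hv; simp at hv, rfl⟩
  have := Nat.sSup_mem hne (aux_bddAbove G)
  obtain ⟨F, hF, hc⟩ := this
  exact ⟨F, hF, hc⟩

lemma concat_isPath {G : SimpleGraph V} {u v w : V} (p : G.Walk u v) (h : G.Adj v w)
    (hp : p.IsPath) (hw : w ∉ p.support) : (p.concat h).IsPath := by
  rw [← SimpleGraph.Walk.isPath_reverse_iff, SimpleGraph.Walk.reverse_concat,
    SimpleGraph.Walk.cons_isPath_iff]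
  exact ⟨hp.reverse, by simpa [SimpleGraph.Walk.support_reverse] using hw⟩

lemma dist_le_succ_of_adj {G : SimpleGraph V} {r a b : V}
    (hr : G.Reachable r a) (hab : G.Adj a b) : G.dist r b ≤ G.dist r a + 1 := by
  obtain ⟨p, -, hl⟩ := hr.exists_path_of_dist
  calc G.dist r b ≤ (p.concat hab).length := SimpleGraph.dist_le _
    _ = G.dist r a + 1 := by rw [SimpleGraph.Walk.length_concat, hl]

lemma not_mem_support_of_lt_dist {G : SimpleGraph V} {r y x : V} (p : G.Walk r y)
    (h : p.length < G.dist r x) : x ∉ p.support := by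
  classical
  intro hx
  have h1 := SimpleGraph.dist_le (p.takeUntil x hx)
  have h2 := SimpleGraph.Walk.length_takeUntil_le p hx
  omega

lemma adj_dist_ne {G : SimpleGraph V} (hG : G.IsAcyclic) {r a b : V}
    (hra : G.Reachable r a) (hab : G.Adj a b) : G.dist r a ≠ G.dist r b := by
  classical
  intro hd
  have hrb : G.Reachable r b := hra.trans hab.reachable
  rcases Nat.eq_zero_or_pos (G.dist r a) with h0 | hpos
  · have ha : r = a := hra.dist_eq_zero_iff.mp h0
    have hb : r = b := hrb.dist_eq_zero_iff.mp (by omega)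
    exact hab.ne (ha ▸ hb ▸ rfl)
  · obtain ⟨p, hp, hpl⟩ := hra.exists_path_of_dist
    obtain ⟨q, hq, hql⟩ := hrb.exists_path_of_dist
    have hbp : b ∉ p.support := by
      intro hx
      have h1 := SimpleGraph.dist_le (p.takeUntil b hx)
      have h2 := congrArg SimpleGraph.Walk.length (p.take_spec hx)
      rw [SimpleGraph.Walk.length_append] at h2
      have h3 : (p.dropUntil b hx).length = 0 := by omega
      exact hab.ne' (SimpleGraph.Walk.eq_of_length_eq_zero h3)
    have hQ : (p.concat hab).IsPath := concat_isPath p hab hp hbp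
    have heq : p.concat hab = q :=
      congrArg Subtype.val (hG.path_unique ⟨p.concat hab, hQ⟩ ⟨q, hq⟩)
    have := congrArg SimpleGraph.Walk.length heq
    rw [SimpleGraph.Walk.length_concat] at this
    omega

lemma parent_unique {G : SimpleGraph V} (hG : G.IsAcyclic) {r x y1 y2 : V}
    (h1 : G.Adj y1 x) (h2 : G.Adj y2 x)
    (hr1 : G.Reachable r y1) (hr2 : G.Reachable r y2)
    (hd1 : G.dist r y1 + 1 = G.dist r x) (hd2 : G.dist r y2 + 1 = G.dist r x) : y1 = y2 := by
  obtain ⟨p1, hp1, hl1⟩ := hr1.exists_path_of_dist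
  obtain ⟨p2, hp2, hl2⟩ := hr2.exists_path_of_dist
  have hx1 : x ∉ p1.support := not_mem_support_of_lt_dist p1 (by omega)
  have hx2 : x ∉ p2.support := not_mem_support_of_lt_dist p2 (by omega)
  have hQ1 : (p1.concat h1).IsPath := concat_isPath p1 h1 hp1 hx1
  have hQ2 : (p2.concat h2).IsPath := concat_isPath p2 h2 hp2 hx2
  have heq : p1.concat h1 = p2.concat h2 :=
    congrArg Subtype.val (hG.path_unique ⟨p1.concat h1, hQ1⟩ ⟨p2.concat h2, hQ2⟩)
  have hsup := congrArg SimpleGraph.Walk.support (congrArg SimpleGraph.Walk.reverse heq)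
  rw [SimpleGraph.Walk.reverse_concat, SimpleGraph.Walk.reverse_concat,
    SimpleGraph.Walk.support_cons, SimpleGraph.Walk.support_cons] at hsup
  have htails : p1.reverse.support = p2.reverse.support := by
    injection hsup
  rw [SimpleGraph.Walk.support_eq_cons p1.reverse,
    SimpleGraph.Walk.support_eq_cons p2.reverse] at htails
  injection htails

lemma leaf_of_max {G : SimpleGraph V} (hG : G.IsAcyclic) {r : V} {D : ℕ}
    (hmax : ∀ y, G.Reachable r y → G.dist r y ≤ D)
    {z w : V} (hz : G.Reachable r z) (hzD : G.dist r z = D)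
    (hadj : G.Adj z w) (hwD : G.dist r w + 1 = D) :
    ∀ y, G.Adj z y → y = w := by
  intro y hy
  have hry : G.Reachable r y := hz.trans hy.reachable
  have h1 : G.dist r y ≤ D := hmax y hry
  have h2 : G.dist r y ≠ D := by
    intro h
    exact adj_dist_ne hG hz hy (by rw [hzD, h])
  have h3 : G.dist r z ≤ G.dist r y + 1 := dist_le_succ_of_adj hry hy.symm
  have h4 : G.dist r y + 1 = G.dist r z := by omega
  have h5 : G.dist r w + 1 = G.dist r z := by omega
  exact parent_unique hG hy.symm hadj.symm hry (hz.trans hadj.reachable) h4 h5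

lemma induce_acyclic {G : SimpleGraph V} (hG : G.IsAcyclic) (s : Set V) :
    (G.induce s).IsAcyclic := by
  intro v c hc
  exact hG (c.map (SimpleGraph.Embedding.induce (G := G) s).toHom)
    ((SimpleGraph.Walk.map_isCycle_iff_of_injective
      (SimpleGraph.Embedding.induce (G := G) s).injective).mpr hc)

lemma lift_dissoc [Fintype V] {G : SimpleGraph V} (S A : Finset V)
    [Fintype ↥{v : V | v ∉ S}]
    (hAS : A ⊆ S) (hA2 : A.card ≤ 2)
    (hout : ∀ a ∈ A, ∀ z, G.Adj a z → z ∈ S) :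
    dissocNum (G.induce {v : V | v ∉ S}) + A.card ≤ dissocNum G := by
  classical
  obtain ⟨F', hF', hcard⟩ := exists_max_dissoc (G.induce {v : V | v ∉ S})
  set img : Finset V := F'.image Subtype.val with himg_def
  have himg : ∀ v ∈ img, v ∉ S := by
    intro v hv
    rw [himg_def, Finset.mem_image] at hv
    obtain ⟨x, -, rfl⟩ := hv
    exact x.2
  have hdisj : Disjoint img A := by
    rw [Finset.disjoint_left]
    intro v hv hvA
    exact himg v hv (hAS hvA)
  have hF : IsDissocSet G (img ∪ A) := by
    intro v hv u hu w hw hvu hvw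
    rcases Finset.mem_union.mp hv with hvI | hvA
    · have hmemI : ∀ z ∈ img ∪ A, G.Adj v z → z ∈ img := by
        intro z hz hvz
        rcases Finset.mem_union.mp hz with h | h
        · exact h
        · exact absurd (hout z h v hvz.symm) (himg v hvI)
      have huI := hmemI u hu hvu
      have hwI := hmemI w hw hvw
      simp only [himg_def, Finset.mem_image] at hvI huI hwI
      obtain ⟨v', hv', rfl⟩ := hvI
      obtain ⟨u', hu', rfl⟩ := huI
      obtain ⟨w', hw', rfl⟩ := hwI
      have := hF' v' hv' u' hu' w' hw' hvu hvw
      exact congrArg Subtype.val this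
    · have hmemA : ∀ z ∈ img ∪ A, G.Adj v z → z ∈ A := by
        intro z hz hvz
        have hzS := hout v hvA z hvz
        rcases Finset.mem_union.mp hz with h | h
        · exact absurd hzS (himg z h)
        · exact h
      have huA := hmemA u hu hvu
      have hwA := hmemA w hw hvw
      by_contra huw
      have hsub : ({v, u, w} : Finset V) ⊆ A := by
        intro z hz
        simp only [Finset.mem_insert, Finset.mem_singleton] at hz
        rcases hz with rfl | rfl | rfl
        · exact hvA
        · exact huA
        · exact hwA
      have hc3 : ({v, u, w} : Finset V).card = 3 := by
        rw [Finset.card_insert_of_notMem (by simp [hvu.ne, hvw.ne]),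
          Finset.card_insert_of_notMem (by simp [huw]), Finset.card_singleton]
      have := Finset.card_le_card hsub
      omega
  have hcards : (img ∪ A).card = F'.card + A.card := by
    rw [Finset.card_union_of_disjoint hdisj, himg_def,
      Finset.card_image_of_injective _ Subtype.val_injective]
  have := le_dissocNum hF
  omega

lemma card_compl_subtype [Fintype V] (S : Finset V) [Fintype ↥{v : V | v ∉ S}] :
    Fintype.card ↥{v : V | v ∉ S} = Fintype.card V - S.card := by
  classical
  have h1 : {v : V | v ∉ S} = (↑S : Set V)ᶜ := by ext v; simp
  have h2 : Nat.card ↥{v : V | v ∉ S} = ({v : V | v ∉ S} : Set V).ncard :=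
    Nat.card_coe_set_eq _
  have h3 := Set.ncard_add_ncard_compl (↑S : Set V)
  rw [Set.ncard_coe_finset] at h3
  rw [← Nat.card_eq_fintype_card, h2, h1]
  have h4 : Nat.card V = Fintype.card V := Nat.card_eq_fintype_card
  omega

end Aux

section Main

open SimpleGraph Finset

universe u

lemma forest_bound : ∀ (n : ℕ), ∀ (V : Type u) [Fintype V] (G : SimpleGraph V),
    G.IsAcyclic → Fintype.card V = n → 2 * n ≤ 3 * dissocNum G := by
  intro n
  induction n using Nat.strong_induction_on with
  | _ n IH =>
    intro V _ G hG hn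
    classical
    -- a common step lemma
    have step : ∀ (S A : Finset V), A ⊆ S → A.card ≤ 2 → S.Nonempty →
        (∀ a ∈ A, ∀ z, G.Adj a z → z ∈ S) → 2 * S.card ≤ 3 * A.card →
        2 * n ≤ 3 * dissocNum G := by
      intro S A hAS hA2 hSne hout hratio
      have hSn : S.card ≤ n := hn ▸ S.card_le_univ
      have hS1 : 1 ≤ S.card := Finset.card_pos.mpr hSne
      have hlift := lift_dissoc S A hAS hA2 hout
      have hcompl : Fintype.card ↥{v : V | v ∉ S} = n - S.card := by
        rw [card_compl_subtype, hn]
      have hIH := IH (n - S.card) (by omega) ↥{v : V | v ∉ S}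
        (G.induce {v : V | v ∉ S}) (induce_acyclic hG _) hcompl
      have hAcard : 2 * S.card ≤ 3 * A.card := hratio
      omega
    rcases Nat.eq_zero_or_pos n with rfl | hpos
    · omega
    have hVne : Nonempty V := Fintype.card_pos_iff.mp (hn ▸ hpos)
    obtain ⟨r⟩ := hVne
    -- pick a reachable vertex at maximum distance
    set R : Finset V := Finset.univ.filter (fun x => G.Reachable r x) with hR
    have hrR : r ∈ R := by simp [hR, SimpleGraph.Reachable.refl]
    obtain ⟨u, huR, hu⟩ := R.exists_max_image (fun x => G.dist r x) ⟨r, hrR⟩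
    set D : ℕ := G.dist r u with hD
    have hru : G.Reachable r u := by simpa [hR] using huR
    have hmax : ∀ y, G.Reachable r y → G.dist r y ≤ D := by
      intro y hy
      exact hu y (by simp [hR, hy])
    rcases Nat.eq_zero_or_pos D with hD0 | hDpos
    · -- r is isolated
      refine step {r} {r} (by simp) (by simp) ⟨r, by simp⟩ ?_ (by simp)
      intro a ha z hz
      simp only [Finset.mem_singleton] at ha
      rw [ha] at hz
      have hrz : G.Reachable r z := hz.reachable
      have h0 : G.dist r z = 0 := by have := hmax z hrz; omega
      have : r = z := hrz.dist_eq_zero_iff.mp h0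
      exact absurd (this ▸ hz) (G.irrefl)
    · -- D ≥ 1 : find the neighbor w of u towards r
      obtain ⟨p, hp, hpl⟩ := hru.exists_path_of_dist
      have hpnil : ¬ p.reverse.Nil := by
        rw [SimpleGraph.Walk.not_nil_iff_lt_length, SimpleGraph.Walk.length_reverse]
        omega
      obtain ⟨w, hadj, q, hq⟩ := SimpleGraph.Walk.not_nil_iff.mp hpnil
      -- hadj : G.Adj u w, q : G.Walk w r
      have hql : q.length = D - 1 := by
        have := congrArg SimpleGraph.Walk.length hq
        rw [SimpleGraph.Walk.length_reverse, SimpleGraph.Walk.length_cons] at this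
        omega
      have hrw : G.Reachable r w := ⟨q.reverse⟩
      have hwle : G.dist r w ≤ D - 1 := by
        have := SimpleGraph.dist_le q.reverse
        rwa [SimpleGraph.Walk.length_reverse, hql] at this
      have hwge : D ≤ G.dist r w + 1 := by
        have := dist_le_succ_of_adj hrw hadj.symm
        omega
      have hwD : G.dist r w + 1 = D := by omega
      have hu_leaf : ∀ y, G.Adj u y → y = w := leaf_of_max hG hmax hru rfl hadj hwD
      -- neighbors of w
      set N : Finset V := G.neighborFinset w with hN
      have huN : u ∈ N := by simp [hN, hadj.symm]
      set M : Finset V := N.filter (fun z => G.dist r z = D) with hM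
      have hMsub : M ⊆ N := Finset.filter_subset _ _
      have huM : u ∈ M := by simp [hM, huN, ← hD]
      -- every neighbor of w not in M is the unique parent
      have hNM : ∀ z ∈ N \ M, G.dist r z + 1 = G.dist r w := by
        intro z hz
        rw [Finset.mem_sdiff] at hz
        obtain ⟨hzN, hzM⟩ := hz
        have hzadj : G.Adj w z := by rwa [hN, SimpleGraph.mem_neighborFinset] at hzN
        have hzr : G.Reachable r z := hrw.trans hzadj.reachable
        have h1 : G.dist r z ≤ D := hmax z hzr
        have h2 : G.dist r z ≠ D := by
          intro h
          exact hzM (by simp [hM, hzN, h])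
        have h3 : G.dist r z ≠ G.dist r w := fun h => adj_dist_ne hG hzr hzadj.symm h
        have h4 : G.dist r w ≤ G.dist r z + 1 := dist_le_succ_of_adj hzr hzadj.symm
        omega
      have hNMcard : (N \ M).card ≤ 1 := by
        rw [Finset.card_le_one]
        intro a ha b hb
        have haa := hNM a ha
        have hbb := hNM b hb
        rw [Finset.mem_sdiff] at ha hb
        have haadj : G.Adj w a := by
          have := ha.1
          rwa [hN, SimpleGraph.mem_neighborFinset] at this
        have hbadj : G.Adj w b := by
          have := hb.1
          rwa [hN, SimpleGraph.mem_neighborFinset] at this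
        exact parent_unique hG haadj.symm hbadj.symm (hrw.trans haadj.reachable)
          (hrw.trans hbadj.reachable) haa hbb
      have hNcard : N.card ≤ M.card + 1 := by
        have := Finset.card_sdiff_add_card_eq_card hMsub
        omega
      have huw : u ≠ w := hadj.ne
      rcases lt_or_ge 1 M.card with hM2 | hM1
      · -- w has two leaf neighbors u and y
        obtain ⟨y, hyM, hyu⟩ := Finset.exists_mem_ne hM2 u
        rw [hM, Finset.mem_filter] at hyM
        obtain ⟨hyN, hyD⟩ := hyM
        have hyadj : G.Adj w y := by rwa [hN, SimpleGraph.mem_neighborFinset] at hyN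
        have hry : G.Reachable r y := hrw.trans hyadj.reachable
        have hy_leaf : ∀ z, G.Adj y z → z = w := leaf_of_max hG hmax hry hyD hyadj.symm hwD
        have hyw : y ≠ w := hyadj.ne'
        have cS : ({u, y, w} : Finset V).card = 3 := by
          rw [Finset.card_insert_of_notMem (by simp [hyu.symm, huw]),
            Finset.card_insert_of_notMem (by simp [hyw]), Finset.card_singleton]
        have cA : ({u, y} : Finset V).card = 2 := by
          rw [Finset.card_insert_of_notMem (by simp [hyu.symm]), Finset.card_singleton]
        refine step {u, y, w} {u, y} ?_ (by omega) ⟨u, by simp⟩ ?_ (by omega)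
        · intro z hz
          simp only [Finset.mem_insert, Finset.mem_singleton] at hz ⊢
          tauto
        · intro a ha z hz
          simp only [Finset.mem_insert, Finset.mem_singleton] at ha
          rcases ha with ha | ha
          · rw [ha] at hz
            have := hu_leaf z hz
            simp [this]
          · rw [ha] at hz
            have := hy_leaf z hz
            simp [this]
      · -- w has degree at most 2
        have hN1 : 1 ≤ N.card := Finset.card_pos.mpr ⟨u, huN⟩
        have huMc : 1 ≤ M.card := Finset.card_pos.mpr ⟨u, huM⟩
        rcases Nat.lt_or_ge N.card 2 with h1 | h2
        · -- N = {u}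
          have hNc1 : N.card = 1 := by omega
          have hNu : N = {u} := by
            obtain ⟨a, haa⟩ := Finset.card_eq_one.mp hNc1
            rw [haa] at huN
            rw [Finset.mem_singleton] at huN
            rw [haa, huN]
          have cS : ({u, w} : Finset V).card = 2 := by
            rw [Finset.card_insert_of_notMem (by simp [huw]), Finset.card_singleton]
          refine step {u, w} {u, w} (Finset.Subset.refl _) (by omega) ⟨u, by simp⟩ ?_ (by omega)
          intro a ha z hz
          simp only [Finset.mem_insert, Finset.mem_singleton] at ha
          rcases ha with ha | ha
          · rw [ha] at hz
            have := hu_leaf z hz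
            simp [this]
          · rw [ha] at hz
            have hzN : z ∈ N := by rw [hN, SimpleGraph.mem_neighborFinset]; exact hz
            rw [hNu, Finset.mem_singleton] at hzN
            simp [hzN]
        · -- N has exactly two elements u and x
          have hN2 : N.card = 2 := by omega
          obtain ⟨x, hxN, hxu⟩ := Finset.exists_mem_ne (s := N) (by omega) u
          have hxadj : G.Adj w x := by rwa [hN, SimpleGraph.mem_neighborFinset] at hxN
          have hxw : x ≠ w := hxadj.ne'
          have cux : ({u, x} : Finset V).card = 2 := by
            rw [Finset.card_insert_of_notMem (by simp [hxu.symm]), Finset.card_singleton]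
          have hNeq : ({u, x} : Finset V) = N := by
            refine Finset.eq_of_subset_of_card_le ?_ (by omega)
            intro z hz
            simp only [Finset.mem_insert, Finset.mem_singleton] at hz
            rcases hz with rfl | rfl
            · exact huN
            · exact hxN
          have cS : ({u, w, x} : Finset V).card = 3 := by
            rw [Finset.card_insert_of_notMem (by simp [huw, hxu.symm]),
              Finset.card_insert_of_notMem (by simp [hxw.symm]), Finset.card_singleton]
          have cA : ({u, w} : Finset V).card = 2 := by
            rw [Finset.card_insert_of_notMem (by simp [huw]), Finset.card_singleton]
          refine step {u, w, x} {u, w} ?_ (by omega) ⟨u, by simp⟩ ?_ (by omega)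
          · intro z hz
            simp only [Finset.mem_insert, Finset.mem_singleton] at hz ⊢
            tauto
          · intro a ha z hz
            simp only [Finset.mem_insert, Finset.mem_singleton] at ha
            rcases ha with ha | ha
            · rw [ha] at hz
              have := hu_leaf z hz
              simp [this]
            · rw [ha] at hz
              have hzN : z ∈ N := by rw [hN, SimpleGraph.mem_neighborFinset]; exact hz
              rw [← hNeq] at hzN
              simp only [Finset.mem_insert, Finset.mem_singleton] at hzN ⊢
              tauto

end Main

/-- If `T` is a tree of order `n`, then its dissociation number is at least `2n/3`. -/
theorem dissocNum_ge_two_thirds {V : Type*} [Fintype V] (T : SimpleGraph V)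
    (hT : T.IsTree) :
    (2 * (Fintype.card V : ℝ)) / 3 ≤ (dissocNum T : ℝ) := by
  have h := forest_bound (Fintype.card V) V T hT.IsAcyclic rfl
  rw [div_le_iff₀ (by norm_num : (0:ℝ) < 3)]
  have : ((2 * Fintype.card V : ℕ) : ℝ) ≤ ((3 * dissocNum T : ℕ) : ℝ) := by exact_mod_cast h
  push_cast at this
  linarith
end

section
/- If T is a subcubic tree of order n, then the dissociation number of T is at most (4n+2)/5. -/
/-! Count the `2(n - 1)` darts of the tree against a dissociation set `F`. At most `|F|` of them
have both ends in `F`, since `T[F]` is a matching. Every other dart, or its reverse, starts outside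
`F`, and at most `3 |Fᶜ|` darts do. Hence `2n - 2 ≤ |F| + 6 (n - |F|)`. -/

open Finset

namespace SimpleGraph

variable {V : Type*} [Fintype V] [DecidableEq V] {G : SimpleGraph V} [DecidableRel G.Adj]

lemma card_darts_fst_notMem_le {Δ : ℕ} (hΔ : ∀ v, G.degree v ≤ Δ) (S : Finset V) :
    #{d : G.Dart | d.fst ∉ S} ≤ Δ * #Sᶜ := by
  refine card_le_mul_card_image_of_maps_to (f := fun d : G.Dart => d.fst) (by simp) Δ
    fun v _ => ?_
  calc #{d ∈ ({d : G.Dart | d.fst ∉ S} : Finset _) | d.fst = v}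
      ≤ #{d : G.Dart | d.fst = v} := card_le_card (filter_subset_filter _ (subset_univ _))
    _ = G.degree v := G.dart_fst_fiber_card_eq_degree v
    _ ≤ Δ := hΔ v

lemma card_darts_not_inside_le {Δ : ℕ} (hΔ : ∀ v, G.degree v ≤ Δ) (S : Finset V) :
    #{d : G.Dart | ¬(d.fst ∈ S ∧ d.snd ∈ S)} ≤ 2 * Δ * #Sᶜ := by
  set A : Finset G.Dart := {d | d.fst ∉ S}
  have hsub : ({d : G.Dart | ¬(d.fst ∈ S ∧ d.snd ∈ S)} : Finset _) ⊆ A ∪ A.image Dart.symm := by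
    intro d
    by_cases h : d.fst ∈ S
    · simpa [A, h] using fun hd => ⟨d.symm, hd, d.symm_symm⟩
    · simp [A, h]
  calc _ ≤ #(A ∪ A.image Dart.symm) := card_le_card hsub
    _ ≤ #A + #A := (card_union_le _ _).trans (Nat.add_le_add_left card_image_le _)
    _ ≤ 2 * Δ * #Sᶜ := by linarith [card_darts_fst_notMem_le hΔ S]

end SimpleGraph

lemma IsDissocSet.card_darts_inside_le {V : Type*} [Fintype V] [DecidableEq V] {G : SimpleGraph V}
    [DecidableRel G.Adj] {F : Finset V} (hF : IsDissocSet G F) :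
    #{d : G.Dart | d.fst ∈ F ∧ d.snd ∈ F} ≤ #F := by
  refine card_le_card_of_injOn (fun d : G.Dart => d.fst) (fun d hd => (mem_filter.mp hd).2.1) ?_
  intro d₁ h₁ d₂ h₂ hfst
  simp only [coe_filter, mem_univ, true_and, Set.mem_ofPred_eq] at h₁ h₂
  replace hfst : d₁.fst = d₂.fst := hfst
  have hsnd : d₁.snd = d₂.snd := hF _ h₁.1 _ h₁.2 _ h₂.2 d₁.adj (hfst ▸ d₂.adj)
  exact SimpleGraph.Dart.ext _ _ (Prod.ext hfst hsnd)

lemma IsDissocSet.two_mul_card_edgeFinset_le {V : Type*} [Fintype V] [DecidableEq V]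
    {G : SimpleGraph V} [DecidableRel G.Adj] {F : Finset V} (hF : IsDissocSet G F) {Δ : ℕ}
    (hΔ : ∀ v, G.degree v ≤ Δ) : 2 * #G.edgeFinset ≤ #F + 2 * Δ * #Fᶜ := by
  rw [← G.dart_card_eq_twice_card_edges, ← card_univ,
    ← card_filter_add_card_filter_not (fun d : G.Dart => d.fst ∈ F ∧ d.snd ∈ F)]
  exact Nat.add_le_add hF.card_darts_inside_le (G.card_darts_not_inside_le hΔ F)

lemma Subcubic.degree_le {V : Type*} [Fintype V] {G : SimpleGraph V} [DecidableRel G.Adj]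
    (hG : Subcubic G) (v : V) : G.degree v ≤ 3 := by
  have h := hG v
  rwa [Set.ncard_eq_toFinset_card'] at h

lemma IsDissocSet.five_mul_card_le_of_isTree {V : Type*} [Fintype V] {T : SimpleGraph V}
    (hT : T.IsTree) (hsub : Subcubic T) {F : Finset V} (hF : IsDissocSet T F) :
    5 * #F ≤ 4 * Fintype.card V + 2 := by
  classical
  have hedges := hF.two_mul_card_edgeFinset_le hsub.degree_le
  have htree : #T.edgeFinset + 1 = Fintype.card V := hT.card_edgeFinset
  have hcompl : #F + #Fᶜ = Fintype.card V := card_add_card_compl F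
  omega

lemma exists_isDissocSet_card_eq_dissocNum {V : Type*} [Fintype V] (G : SimpleGraph V) :
    ∃ F : Finset V, IsDissocSet G F ∧ #F = dissocNum G := by
  refine Nat.sSup_mem (s := {n | ∃ F : Finset V, IsDissocSet G F ∧ #F = n})
    ⟨0, ∅, by simp [IsDissocSet], card_empty⟩ ⟨Fintype.card V, ?_⟩
  rintro _ ⟨F, -, rfl⟩
  exact card_le_univ F

/-- If `T` is a subcubic tree of order `n`, then its dissociation number is at most `(4n+2)/5`. -/
theorem dissocNum_le_of_subcubic {V : Type*} [Fintype V] (T : SimpleGraph V)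
    (hT : T.IsTree) (hsub : Subcubic T) :
    (dissocNum T : ℝ) ≤ (4 * (Fintype.card V : ℝ) + 2) / 5 := by
  obtain ⟨F, hF, hcard⟩ := exists_isDissocSet_card_eq_dissocNum T
  have h : (5 * #F : ℝ) ≤ 4 * Fintype.card V + 2 :=
    mod_cast hF.five_mul_card_le_of_isTree hT hsub
  rw [← hcard, le_div_iff₀ (by norm_num)]
  linarith
end

section
/- If T is a tree, v is a leaf of T, and the dissociation number of T - v equals the dissociation number of T, then the number of maximum dissociation sets of T not containing v is at most the number of maximum dissociation sets F of T with v ∈ F and v isolated in T[F], and also at most the number of maximum dissociation sets F of T with v ∈ F and v having degree 1 in T[F]. -/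
lemma dissoc_card_le {V : Type*} [Fintype V] (G : SimpleGraph V) {F : Finset V}
    (h : IsDissocSet G F) : F.card ≤ dissocNum G := by
  apply le_csSup
  · refine ⟨Fintype.card V, ?_⟩
    rintro n ⟨F, -, rfl⟩
    exact Finset.card_le_univ F
  · exact ⟨F, h, rfl⟩

lemma acyclic_no_triangle {V : Type*} {G : SimpleGraph V} (hG : G.IsAcyclic) {a b c : V}
    (hab : G.Adj a b) (hbc : G.Adj b c) (hac : G.Adj a c) : False := by
  have hne : b ≠ c := fun h => G.irrefl (h ▸ hbc)
  have hab' : a ≠ b := G.ne_of_adj hab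
  have hac' : a ≠ c := G.ne_of_adj hac
  have := hG ((SimpleGraph.Walk.cons hab (SimpleGraph.Walk.cons hbc
      (SimpleGraph.Walk.cons hac.symm SimpleGraph.Walk.nil))))
  apply this
  constructor
  · constructor
    · simp only [SimpleGraph.Walk.isTrail_def, SimpleGraph.Walk.edges_cons,
        SimpleGraph.Walk.edges_nil, List.nodup_cons, List.mem_cons, List.not_mem_nil,
        or_false, List.nodup_nil, and_true, Sym2.eq, Sym2.rel_iff', Prod.mk.injEq,
        Prod.swap_prod_mk, not_or]
      tauto
    · simp
  · simp only [SimpleGraph.Walk.support_cons, SimpleGraph.Walk.support_nil, List.tail_cons,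
      List.nodup_cons, List.mem_cons, List.not_mem_nil, or_false, List.nodup_nil, and_true,
      not_or]
    tauto

/-- If `T` is a tree, `v` is a leaf of `T`, and `ψ(T - v) = ψ(T)`, then the number of maximum
dissociation sets of `T` avoiding `v` is at most the number of maximum dissociation sets
containing `v` with `v` isolated in the induced subgraph, and also at most the number of those
containing `v` with `v` of degree 1 in the induced subgraph. -/
theorem avoiding_le_min {V : Type*} [Fintype V] [DecidableEq V] (T : SimpleGraph V)
    (hT : T.IsTree) (v u : V) (hadj : T.Adj v u) (hleaf : ∀ w, T.Adj v w → w = u)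
    (hpsi : dissocNum (T.induce {w | w ≠ v}) = dissocNum T) :
    {F : Finset V | IsMaxDissocSet T F ∧ v ∉ F}.ncard ≤
        {F : Finset V | IsMaxDissocSet T F ∧ v ∈ F ∧ ∀ w ∈ F, ¬ T.Adj v w}.ncard ∧
      {F : Finset V | IsMaxDissocSet T F ∧ v ∉ F}.ncard ≤
        {F : Finset V | IsMaxDissocSet T F ∧ v ∈ F ∧ ∃ w ∈ F, T.Adj v w}.ncard := by
  classical
  have hvu : v ≠ u := T.ne_of_adj hadj
  -- every max dissociation set avoiding v contains u, and u has a neighbor in it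
  have key : ∀ F : Finset V, IsMaxDissocSet T F → v ∉ F →
      u ∈ F ∧ ∃ w, w ∈ F ∧ T.Adj u w := by
    rintro F ⟨hdis, hcard⟩ hv
    have hu : u ∈ F := by
      by_contra hu
      have hins : IsDissocSet T (insert v F) := by
        intro a ha b hb c hc hab hac
        simp only [Finset.mem_insert] at ha hb hc
        rcases ha with rfl | ha
        · rw [hleaf b hab, hleaf c hac]
        · have hb' : b ∈ F := by
            rcases hb with rfl | hb
            · exact absurd (hleaf a hab.symm) (fun h => hu (h ▸ ha))
            · exact hb
          have hc' : c ∈ F := by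
            rcases hc with rfl | hc
            · exact absurd (hleaf a hac.symm) (fun h => hu (h ▸ ha))
            · exact hc
          exact hdis a ha b hb' c hc' hab hac
      have := dissoc_card_le T hins
      rw [Finset.card_insert_of_notMem hv, hcard] at this
      omega
    refine ⟨hu, ?_⟩
    by_contra hno
    push_neg at hno
    have hins : IsDissocSet T (insert v F) := by
      intro a ha b hb c hc hab hac
      simp only [Finset.mem_insert] at ha hb hc
      rcases ha with rfl | ha
      · rw [hleaf b hab, hleaf c hac]
      · by_cases hau : a = u
        · subst hau
          have hb' : b = v := by
            rcases hb with rfl | hb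
            · rfl
            · exact absurd hab (hno b hb)
          have hc' : c = v := by
            rcases hc with rfl | hc
            · rfl
            · exact absurd hac (hno c hc)
          rw [hb', hc']
        · have hb' : b ∈ F := by
            rcases hb with rfl | hb
            · exact absurd (hleaf a hab.symm) hau
            · exact hb
          have hc' : c ∈ F := by
            rcases hc with rfl | hc
            · exact absurd (hleaf a hac.symm) hau
            · exact hc
          exact hdis a ha b hb' c hc' hab hac
    have := dissoc_card_le T hins
    rw [Finset.card_insert_of_notMem hv, hcard] at this
    omega
  constructor
  -- FIRST INEQUALITY: map F ↦ insert v (F.erase u)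
  · apply Set.ncard_le_ncard_of_injOn (fun F => insert v (F.erase u))
    · rintro F ⟨⟨hdis, hcard⟩, hv⟩
      obtain ⟨hu, -⟩ := key F ⟨hdis, hcard⟩ hv
      refine ⟨⟨?_, ?_⟩, Finset.mem_insert_self v _, ?_⟩
      · -- dissociation
        intro a ha b hb c hc hab hac
        simp only [Finset.mem_insert, Finset.mem_erase] at ha hb hc
        rcases ha with rfl | ⟨hau, ha⟩
        · rw [hleaf b hab, hleaf c hac]
        · have hb' : b ∈ F := by
            rcases hb with rfl | hb
            · exact absurd (hleaf a hab.symm) hau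
            · exact hb.2
          have hc' : c ∈ F := by
            rcases hc with rfl | hc
            · exact absurd (hleaf a hac.symm) hau
            · exact hc.2
          exact hdis a ha b hb' c hc' hab hac
      · -- cardinality
        have h1 : v ∉ F.erase u := fun h => hv (Finset.mem_of_mem_erase h)
        rw [Finset.card_insert_of_notMem h1]
        have h2 := Finset.card_erase_add_one hu
        omega
      · -- v isolated
        intro w hw hvw
        have : w = u := hleaf w hvw
        subst this
        simp only [Finset.mem_insert, Finset.mem_erase] at hw
        rcases hw with rfl | hw
        · exact T.irrefl hvw
        · exact hw.1 rfl
    · -- injectivity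
      rintro F1 ⟨⟨hdis1, hc1⟩, hv1⟩ F2 ⟨⟨hdis2, hc2⟩, hv2⟩ heq
      obtain ⟨hu1, -⟩ := key F1 ⟨hdis1, hc1⟩ hv1
      obtain ⟨hu2, -⟩ := key F2 ⟨hdis2, hc2⟩ hv2
      simp only at heq
      have h1 : v ∉ F1.erase u := fun h => hv1 (Finset.mem_of_mem_erase h)
      have h2 : v ∉ F2.erase u := fun h => hv2 (Finset.mem_of_mem_erase h)
      have : F1.erase u = F2.erase u := by
        have := congrArg (fun s => Finset.erase s v) heq
        simpa [Finset.erase_insert h1, Finset.erase_insert h2] using this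
      calc F1 = insert u (F1.erase u) := (Finset.insert_erase hu1).symm
        _ = insert u (F2.erase u) := by rw [this]
        _ = F2 := Finset.insert_erase hu2
  -- SECOND INEQUALITY: map F ↦ insert v (F.erase w) where w is u's unique neighbor in F
  · set g : Finset V → V := fun F => if h : ∃ w, w ∈ F ∧ T.Adj u w then h.choose else u with hg
    have hgspec : ∀ F : Finset V, IsMaxDissocSet T F → v ∉ F →
        g F ∈ F ∧ T.Adj u (g F) := by
      intro F hF hv
      obtain ⟨-, hex⟩ := key F hF hv
      simp only [hg, dif_pos hex]
      exact hex.choose_spec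
    have hguniq : ∀ F : Finset V, IsMaxDissocSet T F → v ∉ F →
        ∀ w ∈ F, T.Adj u w → w = g F := by
      intro F hF hv w hw hadjw
      obtain ⟨hu, -⟩ := key F hF hv
      obtain ⟨hg1, hg2⟩ := hgspec F hF hv
      exact hF.1 u hu w hw (g F) hg1 hadjw hg2
    apply Set.ncard_le_ncard_of_injOn (fun F => insert v (F.erase (g F)))
    · rintro F ⟨⟨hdis, hcard⟩, hv⟩
      obtain ⟨hu, -⟩ := key F ⟨hdis, hcard⟩ hv
      obtain ⟨hgF, hgadj⟩ := hgspec F ⟨hdis, hcard⟩ hv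
      have hgu : g F ≠ u := fun h => T.irrefl (h ▸ hgadj)
      have huF' : u ∈ insert v (F.erase (g F)) :=
        Finset.mem_insert_of_mem (Finset.mem_erase.2 ⟨fun h => hgu h.symm, hu⟩)
      refine ⟨⟨?_, ?_⟩, Finset.mem_insert_self v _, u, huF', hadj⟩
      · -- dissociation
        intro a ha b hb c hc hab hac
        simp only [Finset.mem_insert, Finset.mem_erase] at ha hb hc
        rcases ha with rfl | ⟨haw, ha⟩
        · rw [hleaf b hab, hleaf c hac]
        · rcases hb with rfl | hb
          · -- b = v, so a = u
            have hau : a = u := hleaf a hab.symm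
            subst hau
            rcases hc with rfl | hc
            · rfl
            · exact absurd (hguniq F ⟨hdis, hcard⟩ hv c hc.2 hac) hc.1
          · rcases hc with rfl | hc
            · have hau : a = u := hleaf a hac.symm
              subst hau
              exact absurd (hguniq F ⟨hdis, hcard⟩ hv b hb.2 hab) hb.1
            · exact hdis a ha b hb.2 c hc.2 hab hac
      · -- cardinality
        have h1 : v ∉ F.erase (g F) := fun h => hv (Finset.mem_of_mem_erase h)
        rw [Finset.card_insert_of_notMem h1]
        have h2 := Finset.card_erase_add_one hgF
        omega
    · -- injectivity
      rintro F1 hF1s F2 hF2s heq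
      obtain ⟨⟨hdis1, hc1⟩, hv1⟩ := hF1s
      obtain ⟨⟨hdis2, hc2⟩, hv2⟩ := hF2s
      obtain ⟨hu1, -⟩ := key F1 ⟨hdis1, hc1⟩ hv1
      obtain ⟨hu2, -⟩ := key F2 ⟨hdis2, hc2⟩ hv2
      obtain ⟨hw1F, hw1adj⟩ := hgspec F1 ⟨hdis1, hc1⟩ hv1
      obtain ⟨hw2F, hw2adj⟩ := hgspec F2 ⟨hdis2, hc2⟩ hv2
      simp only at heq
      obtain ⟨w1, hw1g⟩ : ∃ w, g F1 = w := ⟨_, rfl⟩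
      obtain ⟨w2, hw2g⟩ : ∃ w, g F2 = w := ⟨_, rfl⟩
      rw [hw1g] at heq hw1F hw1adj
      rw [hw2g] at heq hw2F hw2adj
      have hvw1 : v ≠ w1 := fun h => hv1 (h ▸ hw1F)
      have hvw2 : v ≠ w2 := fun h => hv2 (h ▸ hw2F)
      have h1 : v ∉ F1.erase w1 := fun h => hv1 (Finset.mem_of_mem_erase h)
      have h2 : v ∉ F2.erase w2 := fun h => hv2 (Finset.mem_of_mem_erase h)
      have hC : F1.erase w1 = F2.erase w2 := by
        have := congrArg (fun s => Finset.erase s v) heq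
        simpa [Finset.erase_insert h1, Finset.erase_insert h2] using this
      by_cases hww : w1 = w2
      · calc F1 = insert w1 (F1.erase w1) := (Finset.insert_erase hw1F).symm
          _ = insert w2 (F2.erase w2) := by rw [hC, hww]
          _ = F2 := Finset.insert_erase hw2F
      · -- derive a contradiction: build a dissociation set of size ψ + 1
        exfalso
        set C := F1.erase w1 with hCdef
        have hw1u : w1 ≠ u := fun h => T.irrefl (h ▸ hw1adj)
        have hw2u : w2 ≠ u := fun h => T.irrefl (h ▸ hw2adj)
        have huC : u ∈ C := Finset.mem_erase.2 ⟨fun h => hw1u h.symm, hu1⟩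
        have hw1C : w1 ∉ C := Finset.notMem_erase _ _
        have hw2C : w2 ∉ C := hC ▸ Finset.notMem_erase _ _
        have hCF1 : C ⊆ F1 := Finset.erase_subset _ _
        have hCF2 : C ⊆ F2 := hC ▸ Finset.erase_subset _ _
        have hw1F2 : w1 ∉ F2 := by
          intro h
          exact hw1C (hC ▸ Finset.mem_erase.2 ⟨hww, h⟩)
        have hw2F1 : w2 ∉ F1 := by
          intro h
          exact hw2C (hCdef ▸ Finset.mem_erase.2 ⟨fun h' => hww h'.symm, h⟩)
        set D : Finset V := insert v (insert w1 (insert w2 (C.erase u))) with hD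
        have hmemD : ∀ x, x ∈ D ↔ x = v ∨ x = w1 ∨ x = w2 ∨ (x ∈ C ∧ x ≠ u) := by
          intro x
          simp only [hD, Finset.mem_insert, Finset.mem_erase]
          tauto
        have huD : u ∉ D := by
          rw [hmemD]
          push_neg
          exact ⟨fun h => hvu h.symm, fun h => hw1u h.symm, fun h => hw2u h.symm,
            fun _ => rfl⟩
        have hnbr : ∀ b ∈ D, ∀ a, (a = v ∨ a = w1 ∨ a = w2) → ¬ T.Adj a b := by
          intro b hb a ha hab
          rcases ha with h | h | h <;> rw [h] at hab
          · exact huD (hleaf b hab ▸ hb)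
          · rw [hmemD] at hb
            rcases hb with h1 | h1 | h1 | ⟨hbC, hbu⟩
            · rw [h1] at hab; exact hw1u (hleaf w1 hab.symm)
            · rw [h1] at hab; exact T.irrefl hab
            · rw [h1] at hab; exact acyclic_no_triangle hT.IsAcyclic hw1adj hab hw2adj
            · exact hbu (hdis1 w1 hw1F b (hCF1 hbC) u hu1 hab hw1adj.symm)
          · rw [hmemD] at hb
            rcases hb with h1 | h1 | h1 | ⟨hbC, hbu⟩
            · rw [h1] at hab; exact hw2u (hleaf w2 hab.symm)
            · rw [h1] at hab; exact acyclic_no_triangle hT.IsAcyclic hw2adj hab hw1adj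
            · rw [h1] at hab; exact T.irrefl hab
            · exact hbu (hdis2 w2 hw2F b (hCF2 hbC) u hu2 hab hw2adj.symm)
        have hDdis : IsDissocSet T D := by
          intro a ha b hb c hc hab hac
          rcases (hmemD a).1 ha with h | h | h | ⟨haC, hau⟩
          · exact absurd hab (hnbr b hb a (Or.inl h))
          · exact absurd hab (hnbr b hb a (Or.inr (Or.inl h)))
          · exact absurd hab (hnbr b hb a (Or.inr (Or.inr h)))
          · have hb' : b ∈ C := by
              rcases (hmemD b).1 hb with h | h | h | h
              · exact absurd hab.symm (hnbr a ha b (Or.inl h))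
              · exact absurd hab.symm (hnbr a ha b (Or.inr (Or.inl h)))
              · exact absurd hab.symm (hnbr a ha b (Or.inr (Or.inr h)))
              · exact h.1
            have hc' : c ∈ C := by
              rcases (hmemD c).1 hc with h | h | h | h
              · exact absurd hac.symm (hnbr a ha c (Or.inl h))
              · exact absurd hac.symm (hnbr a ha c (Or.inr (Or.inl h)))
              · exact absurd hac.symm (hnbr a ha c (Or.inr (Or.inr h)))
              · exact h.1
            exact hdis1 a (hCF1 haC) b (hCF1 hb') c (hCF1 hc') hab hac
        -- cardinality of D is dissocNum T + 1
        have hcard1 : (C.erase u).card + 1 = C.card := Finset.card_erase_add_one huC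
        have hcard2 : C.card + 1 = F1.card := Finset.card_erase_add_one hw1F
        have hw2nCe : w2 ∉ C.erase u := fun h => hw2C (Finset.mem_of_mem_erase h)
        have hw1nI : w1 ∉ insert w2 (C.erase u) := by
          simp only [Finset.mem_insert]
          rintro (rfl | h)
          · exact hww rfl
          · exact hw1C (Finset.mem_of_mem_erase h)
        have hvnI : v ∉ insert w1 (insert w2 (C.erase u)) := by
          simp only [Finset.mem_insert]
          rintro (rfl | rfl | h)
          · exact hvw1 rfl
          · exact hvw2 rfl
          · exact hv1 (hCF1 (Finset.mem_of_mem_erase h))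
        have hcardD : D.card = (C.erase u).card + 3 := by
          rw [hD, Finset.card_insert_of_notMem hvnI, Finset.card_insert_of_notMem hw1nI,
            Finset.card_insert_of_notMem hw2nCe]
        have hle := dissoc_card_le T hDdis
        omega
end

section
/- If T is a tree, v is a leaf of T, and ψ(T - v) = ψ(T), then the number of maximum dissociation sets of T that do not contain v is at most one third of the total number of maximum dissociation sets of T. -/
section Aux

variable {V : Type*} [Fintype V] [DecidableEq V] {T : SimpleGraph V}

lemma aux_card_le (F : Finset V) (h : IsDissocSet T F) : F.card ≤ dissocNum T := by
  exact le_csSup ⟨Fintype.card V, by rintro n ⟨F, -, rfl⟩; exact F.card_le_univ⟩ ⟨F, h, rfl⟩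

variable {v u : V} (hadj : T.Adj v u) (hleaf : ∀ w, T.Adj v w → w = u)

include hadj hleaf

/-- every max dissociation set avoiding the leaf `v` contains `u` and a neighbor of `u`. -/
lemma aux_u_mem {F : Finset V} (hF : IsMaxDissocSet T F) (hv : v ∉ F) :
    u ∈ F ∧ ∃ w ∈ F, T.Adj u w := by
  by_contra H
  push_neg at H
  have hd : IsDissocSet T (insert v F) := by
    intro x hx y hy z hz hxy hxz
    rcases Finset.mem_insert.mp hx with rfl | hxF
    · exact (hleaf y hxy).trans (hleaf z hxz).symm
    · rcases Finset.mem_insert.mp hy with rfl | hyF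
      · have hxu : x = u := hleaf x hxy.symm
        subst hxu
        rcases Finset.mem_insert.mp hz with rfl | hzF
        · rfl
        · exact absurd hxz (H hxF z hzF)
      · rcases Finset.mem_insert.mp hz with rfl | hzF
        · have hxu : x = u := hleaf x hxz.symm
          subst hxu
          exact absurd hxy (H hxF y hyF)
        · exact hF.1 x hxF y hyF z hzF hxy hxz
  have hle := aux_card_le (T := T) _ hd
  rw [Finset.card_insert_of_notMem hv, hF.2] at hle
  omega

lemma aux_F1 {F : Finset V} (hF : IsDissocSet T F) (hv : v ∉ F) (hu : u ∈ F)
    {w : V} (hw : w ∈ F) (hadjw : T.Adj u w) :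
    IsDissocSet T (insert v (F.erase w)) := by
  have key : ∀ a ∈ F.erase w, ¬ T.Adj u a := fun a ha hadja =>
    (Finset.ne_of_mem_erase ha) (hF u hu a (Finset.mem_of_mem_erase ha) w hw hadja hadjw)
  intro x hx y hy z hz hxy hxz
  rcases Finset.mem_insert.mp hx with rfl | hxF
  · exact (hleaf y hxy).trans (hleaf z hxz).symm
  · rcases Finset.mem_insert.mp hy with rfl | hyF
    · have hxu : x = u := hleaf x hxy.symm
      subst hxu
      rcases Finset.mem_insert.mp hz with rfl | hzF
      · rfl
      · exact absurd hxz (key z hzF)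
    · rcases Finset.mem_insert.mp hz with rfl | hzF
      · have hxu : x = u := hleaf x hxz.symm
        subst hxu
        exact absurd hxy (key y hyF)
      · exact hF x (Finset.mem_of_mem_erase hxF) y (Finset.mem_of_mem_erase hyF)
          z (Finset.mem_of_mem_erase hzF) hxy hxz

lemma aux_F2 {F : Finset V} (hF : IsDissocSet T F) (hv : v ∉ F) :
    IsDissocSet T (insert v (F.erase u)) := by
  intro x hx y hy z hz hxy hxz
  rcases Finset.mem_insert.mp hx with rfl | hxF
  · have hyu : y = u := hleaf y hxy
    subst hyu
    rcases Finset.mem_insert.mp hy with h | h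
    · exact absurd h.symm hadj.ne
    · exact absurd h (Finset.notMem_erase _ _)
  · rcases Finset.mem_insert.mp hy with rfl | hyF
    · exact absurd (hleaf x hxy.symm) (Finset.ne_of_mem_erase hxF)
    · rcases Finset.mem_insert.mp hz with rfl | hzF
      · exact absurd (hleaf x hxz.symm) (Finset.ne_of_mem_erase hxF)
      · exact hF x (Finset.mem_of_mem_erase hxF) y (Finset.mem_of_mem_erase hyF)
          z (Finset.mem_of_mem_erase hzF) hxy hxz

/-- collisions of the first map are impossible. -/
lemma aux_collision {F F' : Finset V} (hF : IsMaxDissocSet T F) (hF' : IsMaxDissocSet T F')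
    (hvF : v ∉ F) (hvF' : v ∉ F') (hu : u ∈ F) (hu' : u ∈ F')
    {w w' : V} (hw : w ∈ F) (hw' : w' ∈ F') (haw : T.Adj u w) (haw' : T.Adj u w')
    (hne : w ≠ w') (hS : F.erase w = F'.erase w') : False := by
  set S := F.erase w with hSdef
  have huS : u ∈ S := Finset.mem_erase.mpr ⟨haw.ne, hu⟩
  have hwS : w ∉ S := Finset.notMem_erase _ _
  have hw'S : w' ∉ S := by rw [hS]; exact Finset.notMem_erase _ _
  have hSF : S.erase u ⊆ F := fun a ha =>
    Finset.mem_of_mem_erase (Finset.mem_of_mem_erase ha)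
  have hSF' : S.erase u ⊆ F' := fun a ha => by
    have : a ∈ S := Finset.mem_of_mem_erase ha
    rw [hS] at this
    exact Finset.mem_of_mem_erase this
  set D := insert w (insert w' (S.erase u)) with hD
  have hwnb : ∀ a ∈ S.erase u, ¬ T.Adj w a := fun a ha h =>
    (Finset.mem_erase.mp ha).1 (hF.1 w hw a (hSF ha) u hu h haw.symm)
  have hw'nb : ∀ a ∈ S.erase u, ¬ T.Adj w' a := fun a ha h =>
    (Finset.mem_erase.mp ha).1 (hF'.1 w' hw' a (hSF' ha) u hu' h haw'.symm)
  have hdD : IsDissocSet T D := by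
    intro x hx y hy z hz hxy hxz
    rcases Finset.mem_insert.mp hx with rfl | hx1
    · -- x = w : only possible neighbor in D is w'
      have hy' : y = w' := by
        rcases Finset.mem_insert.mp hy with rfl | hy1
        · exact absurd hxy (T.irrefl)
        · rcases Finset.mem_insert.mp hy1 with rfl | hy2
          · rfl
          · exact absurd hxy (hwnb y hy2)
      have hz' : z = w' := by
        rcases Finset.mem_insert.mp hz with rfl | hz1
        · exact absurd hxz (T.irrefl)
        · rcases Finset.mem_insert.mp hz1 with rfl | hz2
          · rfl
          · exact absurd hxz (hwnb z hz2)
      rw [hy', hz']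
    · rcases Finset.mem_insert.mp hx1 with rfl | hx2
      · -- x = w'
        have hy' : y = w := by
          rcases Finset.mem_insert.mp hy with rfl | hy1
          · rfl
          · rcases Finset.mem_insert.mp hy1 with rfl | hy2
            · exact absurd hxy (T.irrefl)
            · exact absurd hxy (hw'nb y hy2)
        have hz' : z = w := by
          rcases Finset.mem_insert.mp hz with rfl | hz1
          · rfl
          · rcases Finset.mem_insert.mp hz1 with rfl | hz2
            · exact absurd hxz (T.irrefl)
            · exact absurd hxz (hw'nb z hz2)
        rw [hy', hz']
      · -- x ∈ S.erase u
        have hy' : y ∈ S.erase u := by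
          rcases Finset.mem_insert.mp hy with rfl | hy1
          · exact absurd hxy.symm (hwnb x hx2)
          · rcases Finset.mem_insert.mp hy1 with rfl | hy2
            · exact absurd hxy.symm (hw'nb x hx2)
            · exact hy2
        have hz' : z ∈ S.erase u := by
          rcases Finset.mem_insert.mp hz with rfl | hz1
          · exact absurd hxz.symm (hwnb x hx2)
          · rcases Finset.mem_insert.mp hz1 with rfl | hz2
            · exact absurd hxz.symm (hw'nb x hx2)
            · exact hz2
        exact hF.1 x (hSF hx2) y (hSF hy') z (hSF hz') hxy hxz
  have h3 : w' ∉ S.erase u := fun h => hw'S (Finset.mem_of_mem_erase h)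
  have h4 : w ∉ insert w' (S.erase u) := by
    simp only [Finset.mem_insert]
    push_neg
    exact ⟨hne, fun h => hwS (Finset.mem_of_mem_erase h)⟩
  have h2card : 2 ≤ F.card := Finset.one_lt_card.mpr ⟨u, hu, w, hw, haw.ne⟩
  have hcD : D.card = F.card := by
    rw [hD, Finset.card_insert_of_notMem h4, Finset.card_insert_of_notMem h3,
      Finset.card_erase_of_mem huS, hSdef, Finset.card_erase_of_mem hw]
    omega
  have hDmax : IsMaxDissocSet T D := ⟨hdD, hcD.trans hF.2⟩
  have hvD : v ∉ D := by
    simp only [hD, Finset.mem_insert]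
    push_neg
    refine ⟨fun h => hvF (h ▸ hw), fun h => hvF' (h ▸ hw'),
      fun h => hvF (hSF h)⟩
  have huD : u ∈ D := (aux_u_mem hadj hleaf hDmax hvD).1
  simp only [hD, Finset.mem_insert] at huD
  rcases huD with h | h | h
  · exact haw.ne h
  · exact haw'.ne h
  · exact (Finset.notMem_erase _ _) h

end Aux

/-- If `T` is a tree, `v` is a leaf of `T`, and `ψ(T - v) = ψ(T)`, then the number of maximum
dissociation sets of `T` that do not contain `v` is at most one third of the total number of
maximum dissociation sets of `T`. -/
theorem avoiding_le_third {V : Type*} [Fintype V] [DecidableEq V] (T : SimpleGraph V)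
    (hT : T.IsTree) (v u : V) (hadj : T.Adj v u) (hleaf : ∀ w, T.Adj v w → w = u)
    (hpsi : dissocNum (T.induce {w | w ≠ v}) = dissocNum T) :
    ({F : Finset V | IsMaxDissocSet T F ∧ v ∉ F}.ncard : ℝ) ≤ (numMaxDissoc T : ℝ) / 3 := by
  classical
  set A : Set (Finset V) := {F | IsMaxDissocSet T F ∧ v ∉ F} with hAdef
  set B : Set (Finset V) := {F | IsMaxDissocSet T F ∧ v ∈ F} with hBdef
  have hprop : ∀ F ∈ A, u ∈ F ∧ ∃ w ∈ F, T.Adj u w :=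
    fun F hF => aux_u_mem hadj hleaf hF.1 hF.2
  set f1 : Finset V → Finset V :=
    fun F => if h : ∃ w ∈ F, T.Adj u w then insert v (F.erase h.choose) else ∅ with hf1def
  set f2 : Finset V → Finset V := fun F => insert v (F.erase u) with hf2def
  -- the image of f1 is in B and contains u
  have hmemB : ∀ F ∈ A, ∀ (w : V), w ∈ F → T.Adj u w →
      IsMaxDissocSet T (insert v (F.erase w)) ∧ v ∈ insert v (F.erase w)
        ∧ u ∈ insert v (F.erase w) := by
    intro F hF w hw hadjw
    have hu : u ∈ F := (hprop F hF).1
    have hvF : v ∉ F := hF.2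
    have hd := aux_F1 hadj hleaf hF.1.1 hvF hu hw hadjw
    have hvne : v ∉ F.erase w := fun h => hvF (Finset.mem_of_mem_erase h)
    have hcard : (insert v (F.erase w)).card = dissocNum T := by
      rw [Finset.card_insert_of_notMem hvne, Finset.card_erase_of_mem hw, hF.1.2]
      have : 1 ≤ F.card := Finset.card_pos.mpr ⟨w, hw⟩
      rw [hF.1.2] at this
      omega
    refine ⟨⟨hd, hcard⟩, Finset.mem_insert_self _ _, ?_⟩
    exact Finset.mem_insert_of_mem (Finset.mem_erase.mpr ⟨hadjw.ne, hu⟩)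
  have key1 : ∀ F ∈ A, f1 F ∈ B ∧ u ∈ f1 F := by
    intro F hF
    have hex := (hprop F hF).2
    have heq : f1 F = insert v (F.erase hex.choose) := dif_pos hex
    obtain ⟨hwF, hadjw⟩ := hex.choose_spec
    obtain ⟨hmax, hvmem, humem⟩ := hmemB F hF _ hwF hadjw
    rw [heq]
    exact ⟨⟨hmax, hvmem⟩, humem⟩
  have key2 : ∀ F ∈ A, f2 F ∈ B ∧ u ∉ f2 F := by
    intro F hF
    have hu : u ∈ F := (hprop F hF).1
    have hvF : v ∉ F := hF.2
    have hd := aux_F2 hadj hleaf hF.1.1 hvF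
    have hvne : v ∉ F.erase u := fun h => hvF (Finset.mem_of_mem_erase h)
    have hcard : (insert v (F.erase u)).card = dissocNum T := by
      rw [Finset.card_insert_of_notMem hvne, Finset.card_erase_of_mem hu, hF.1.2]
      have : 1 ≤ F.card := Finset.card_pos.mpr ⟨u, hu⟩
      rw [hF.1.2] at this
      omega
    refine ⟨⟨⟨hd, hcard⟩, Finset.mem_insert_self _ _⟩, ?_⟩
    simp only [hf2def, Finset.mem_insert]
    push_neg
    exact ⟨hadj.ne', Finset.notMem_erase _ _⟩
  have inj1 : Set.InjOn f1 A := by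
    intro F hF F' hF' heq
    have hex := (hprop F hF).2
    have hex' := (hprop F' hF').2
    obtain ⟨w, hwF, hadjw, hfeq⟩ : ∃ w, w ∈ F ∧ T.Adj u w ∧ f1 F = insert v (F.erase w) :=
      ⟨hex.choose, hex.choose_spec.1, hex.choose_spec.2, dif_pos hex⟩
    obtain ⟨w', hwF', hadjw', hfeq'⟩ : ∃ w, w ∈ F' ∧ T.Adj u w ∧ f1 F' = insert v (F'.erase w) :=
      ⟨hex'.choose, hex'.choose_spec.1, hex'.choose_spec.2, dif_pos hex'⟩
    rw [hfeq, hfeq'] at heq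
    have hvne : v ∉ F.erase w := fun h => hF.2 (Finset.mem_of_mem_erase h)
    have hvne' : v ∉ F'.erase w' := fun h => hF'.2 (Finset.mem_of_mem_erase h)
    have hS : F.erase w = F'.erase w' := by
      have := congrArg (fun s => s.erase v) heq
      simpa [Finset.erase_insert hvne, Finset.erase_insert hvne'] using this
    by_cases hww : w = w'
    · subst hww
      calc F = insert w (F.erase w) := (Finset.insert_erase hwF).symm
        _ = insert w (F'.erase w) := by rw [hS]
        _ = F' := Finset.insert_erase hwF'
    · exact absurd (aux_collision hadj hleaf hF.1 hF'.1 hF.2 hF'.2 (hprop F hF).1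
        (hprop F' hF').1 hwF hwF' hadjw hadjw' hww hS) (by simp)
  have inj2 : Set.InjOn f2 A := by
    intro F hF F' hF' heq
    simp only [hf2def] at heq
    have hvne : v ∉ F.erase u := fun h => hF.2 (Finset.mem_of_mem_erase h)
    have hvne' : v ∉ F'.erase u := fun h => hF'.2 (Finset.mem_of_mem_erase h)
    have hS : F.erase u = F'.erase u := by
      have := congrArg (fun s => s.erase v) heq
      simpa [Finset.erase_insert hvne, Finset.erase_insert hvne'] using this
    calc F = insert u (F.erase u) := (Finset.insert_erase (hprop F hF).1).symm
      _ = insert u (F'.erase u) := by rw [hS]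
      _ = F' := Finset.insert_erase (hprop F' hF').1
  have hAfin : A.Finite := Set.toFinite _
  have hBfin : B.Finite := Set.toFinite _
  have himsub : f1 '' A ∪ f2 '' A ⊆ B := by
    rintro G (⟨F, hF, rfl⟩ | ⟨F, hF, rfl⟩)
    · exact (key1 F hF).1
    · exact (key2 F hF).1
  have hdisj12 : Disjoint (f1 '' A) (f2 '' A) := by
    rw [Set.disjoint_left]
    rintro G ⟨F, hF, rfl⟩ ⟨F', hF', heq⟩
    exact (key2 F' hF').2 (heq ▸ (key1 F hF).2)
  have h2A : 2 * A.ncard ≤ B.ncard := by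
    have e1 : (f1 '' A).ncard = A.ncard := Set.ncard_image_of_injOn inj1
    have e2 : (f2 '' A).ncard = A.ncard := Set.ncard_image_of_injOn inj2
    have e3 : (f1 '' A ∪ f2 '' A).ncard = (f1 '' A).ncard + (f2 '' A).ncard :=
      Set.ncard_union_eq hdisj12 (hAfin.image _) (hAfin.image _)
    have hle := Set.ncard_le_ncard himsub hBfin
    omega
  have hsplit : numMaxDissoc T = A.ncard + B.ncard := by
    have hunion : {F : Finset V | IsMaxDissocSet T F} = A ∪ B := by
      ext F
      simp only [hAdef, hBdef, Set.mem_setOf_eq, Set.mem_union]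
      tauto
    have hdisjAB : Disjoint A B := by
      rw [Set.disjoint_left]
      rintro F ⟨-, h1⟩ ⟨-, h2⟩
      exact h1 h2
    rw [numMaxDissoc, hunion, Set.ncard_union_eq hdisjAB hAfin hBfin]
  rw [le_div_iff₀ (by norm_num : (0:ℝ) < 3)]
  have : 3 * A.ncard ≤ numMaxDissoc T := by omega
  calc (A.ncard : ℝ) * 3 = ((3 * A.ncard : ℕ) : ℝ) := by push_cast; ring
    _ ≤ (numMaxDissoc T : ℝ) := by exact_mod_cast this
end

section
/- If T is a tree and v is a leaf of T with neighbor u such that ψ(T - v) = ψ(T), then every maximum dissociation set F of T - v contains u and u has degree exactly 1 in the subgraph induced by F. -/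
/-- If `T` is a tree and `v` is a leaf of `T` with neighbor `u` such that `ψ(T - v) = ψ(T)`,
then every maximum dissociation set `F` of `T - v` contains `u`, and `u` has degree exactly 1
in the subgraph induced by `F`. -/
theorem leaf_neighbor_in_all_maxDissoc {V : Type*} [Fintype V] [DecidableEq V]
    (T : SimpleGraph V) (hT : T.IsTree) (v u : V) (hadj : T.Adj v u)
    (hleaf : ∀ w, T.Adj v w → w = u) (hne : u ≠ v)
    (hpsi : dissocNum (T.induce {w | w ≠ v}) = dissocNum T) :
    ∀ F : Finset {w : V // w ∈ {w | w ≠ v}},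
      IsMaxDissocSet (T.induce {w | w ≠ v}) F →
        (⟨u, hne⟩ : {w : V // w ∈ {w | w ≠ v}}) ∈ F ∧
          ∃! w, w ∈ F ∧ (T.induce {w | w ≠ v}).Adj ⟨u, hne⟩ w := by
  intro F hF
  set u' : {w : V // w ∈ {w | w ≠ v}} := ⟨u, hne⟩ with hu'
  have key : u' ∈ F ∧ ∃ w ∈ F, (T.induce {w | w ≠ v}).Adj u' w := by
    by_contra hcon
    push_neg at hcon
    -- build a dissociation set of T of size F.card + 1
    set emb : {w : V // w ∈ {w | w ≠ v}} ↪ V := ⟨Subtype.val, Subtype.val_injective⟩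
    set F' : Finset V := insert v (F.map emb) with hF'
    have hvnot : v ∉ F.map emb := by
      simp only [Finset.mem_map]
      rintro ⟨⟨x, hx⟩, _, hxv⟩
      exact hx hxv
    have hcard : F'.card = F.card + 1 := by
      rw [hF', Finset.card_insert_of_notMem hvnot, Finset.card_map]
    have hdiss : IsDissocSet T F' := by
      rintro a ha b hb c hc hab hac
      simp only [hF', Finset.mem_insert, Finset.mem_map] at ha hb hc
      rcases ha with rfl | ⟨⟨a, hav⟩, haF, rfl⟩
      · -- a = v : both b and c equal u
        rw [hleaf b hab, hleaf c hac]
      · -- a comes from F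
        rcases hb with rfl | ⟨⟨b, hbv⟩, hbF, rfl⟩
        · -- b = v, so a = u (symmetry), hence u' ∈ F
          have hau : a = u := hleaf _ hab.symm
          subst hau
          have huF : u' ∈ F := haF
          rcases hc with rfl | ⟨⟨c, hcv⟩, hcF, rfl⟩
          · rfl
          · exact absurd hac (hcon huF ⟨c, hcv⟩ hcF)
        · rcases hc with rfl | ⟨⟨c, hcv⟩, hcF, rfl⟩
          · -- c = v, symmetric: a = u
            have hau : a = u := hleaf _ hac.symm
            subst hau
            have huF : u' ∈ F := haF
            exact absurd hab (hcon huF ⟨b, hbv⟩ hbF)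
          · -- all three in F
            have hadj1 : (T.induce {w | w ≠ v}).Adj ⟨a, hav⟩ ⟨b, hbv⟩ := hab
            have hadj2 : (T.induce {w | w ≠ v}).Adj ⟨a, hav⟩ ⟨c, hcv⟩ := hac
            have := hF.1 _ haF _ hbF _ hcF hadj1 hadj2
            simp only [emb, Function.Embedding.coeFn_mk]
            exact congrArg Subtype.val this
    have hle : F'.card ≤ dissocNum T := by
      apply le_csSup
      · exact ⟨Fintype.card V, by rintro n ⟨G, _, rfl⟩; exact G.card_le_univ⟩
      · exact ⟨F', hdiss, rfl⟩
    rw [hcard, ← hpsi, ← hF.2] at hle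
    omega
  obtain ⟨huF, w, hwF, hwadj⟩ := key
  refine ⟨huF, w, ⟨hwF, hwadj⟩, ?_⟩
  rintro y ⟨hyF, hyadj⟩
  exact hF.1 u' huF y hyF w hwF hyadj hwadj
end

section
/- If T is a subcubic tree of order n with dissociation number ψ = (4n+2)/5, then T has exactly one maximum dissociation set. -/
open SimpleGraph Finset

section Aux

variable {V : Type*} {T : SimpleGraph V}

private lemma aux_dist_le_of_mem_support {r s x : V} (p : T.Walk r s) (hx : x ∈ p.support) :
    T.dist r x ≤ p.length := by
  classical
  calc T.dist r x ≤ (p.takeUntil x hx).length := SimpleGraph.dist_le _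
    _ ≤ p.length := SimpleGraph.Walk.length_takeUntil_le p hx

private lemma aux_dist_lt_of_mem_support {r s x : V} (p : T.Walk r s) (hx : x ∈ p.support)
    (hxs : x ≠ s) : T.dist r x < p.length := by
  classical
  have hspec := p.take_spec hx
  have hlen : (p.takeUntil x hx).length + (p.dropUntil x hx).length = p.length := by
    rw [← SimpleGraph.Walk.length_append, hspec]
  have hdrop : (p.dropUntil x hx).length ≠ 0 := fun h =>
    hxs (SimpleGraph.Walk.eq_of_length_eq_zero h)
  have h1 := SimpleGraph.dist_le (p.takeUntil x hx)
  omega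

/-- In a tree, there is no nonempty finite set `S` such that every vertex of `S` has
two distinct neighbors inside `S`. -/
private lemma aux_no_min_deg_two [Fintype V] (hT : T.IsTree) (S : Finset V) (hS : S.Nonempty)
    (h2 : ∀ x ∈ S, ∃ y z, y ∈ S ∧ z ∈ S ∧ y ≠ z ∧ T.Adj x y ∧ T.Adj x z) : False := by
  classical
  obtain ⟨r, hr⟩ := hS
  obtain ⟨x, hxS, hxmax⟩ := S.exists_max_image (fun v => T.dist r v) ⟨r, hr⟩
  obtain ⟨y, z, hyS, hzS, hyz, hxy, hxz⟩ := h2 x hxS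
  have hconn : T.Connected := hT.isConnected
  have huniq : ∀ v w : V, ∃! p : T.Walk v w, p.IsPath :=
    (SimpleGraph.isTree_iff_existsUnique_path.mp hT).2
  set d := T.dist r x with hd
  -- shortest path to x
  obtain ⟨p0, hp0, hp0len⟩ := (hconn r x).exists_path_of_dist
  -- every neighbor of x inside S has distance exactly d - 1 from r
  have hclaim : ∀ s, T.Adj x s → s ∈ S → T.dist r s + 1 = d := by
    intro s hadj hsS
    have hle : T.dist r s ≤ d := hxmax s hsS
    have htri : d ≤ T.dist r s + 1 := by
      have h1 : T.dist s x ≤ 1 := by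
        have := SimpleGraph.dist_le (SimpleGraph.Walk.cons hadj.symm SimpleGraph.Walk.nil)
        simpa using this
      have := hconn.dist_triangle (u := r) (v := s) (w := x)
      omega
    -- rule out dist r s = d
    rcases Nat.lt_or_ge (T.dist r s) d with hlt | hge
    · omega
    · exfalso
      have heq : T.dist r s = d := le_antisymm hle hge
      obtain ⟨p, hp, hplen⟩ := (hconn r s).exists_path_of_dist
      have hxsup : x ∉ p.support := by
        intro hx
        have := aux_dist_lt_of_mem_support p hx hadj.ne
        omega
      set q : T.Walk r x := p.concat hadj.symm with hq
      have hqpath : q.IsPath := by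
        rw [← SimpleGraph.Walk.isPath_reverse_iff, hq, SimpleGraph.Walk.reverse_concat]
        rw [SimpleGraph.Walk.cons_isPath_iff]
        refine ⟨SimpleGraph.Walk.isPath_reverse_iff _ |>.mpr hp, ?_⟩
        rw [SimpleGraph.Walk.support_reverse]
        simpa using hxsup
      have : q = p0 := by
        obtain ⟨w, -, hw⟩ := huniq r x
        rw [hw q hqpath, hw p0 hp0]
      have hql : q.length = p.length + 1 := SimpleGraph.Walk.length_concat _ _
      have := congrArg SimpleGraph.Walk.length this
      omega
  have hy1 := hclaim y hxy hyS
  have hz1 := hclaim z hxz hzS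
  -- build two distinct paths from r to x
  obtain ⟨py, hpy, hpylen⟩ := (hconn r y).exists_path_of_dist
  obtain ⟨pz, hpz, hpzlen⟩ := (hconn r z).exists_path_of_dist
  have hxpy : x ∉ py.support := by
    intro hx
    have := aux_dist_le_of_mem_support py hx
    omega
  have hxpz : x ∉ pz.support := by
    intro hx
    have := aux_dist_le_of_mem_support pz hx
    omega
  set qy : T.Walk r x := py.concat hxy.symm with hqy
  set qz : T.Walk r x := pz.concat hxz.symm with hqz
  have hqypath : qy.IsPath := by
    rw [← SimpleGraph.Walk.isPath_reverse_iff, hqy, SimpleGraph.Walk.reverse_concat]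
    rw [SimpleGraph.Walk.cons_isPath_iff]
    refine ⟨SimpleGraph.Walk.isPath_reverse_iff _ |>.mpr hpy, ?_⟩
    rw [SimpleGraph.Walk.support_reverse]
    simpa using hxpy
  have hqzpath : qz.IsPath := by
    rw [← SimpleGraph.Walk.isPath_reverse_iff, hqz, SimpleGraph.Walk.reverse_concat]
    rw [SimpleGraph.Walk.cons_isPath_iff]
    refine ⟨SimpleGraph.Walk.isPath_reverse_iff _ |>.mpr hpz, ?_⟩
    rw [SimpleGraph.Walk.support_reverse]
    simpa using hxpz
  have hqq : qy = qz := by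
    obtain ⟨w, -, hw⟩ := huniq r x
    rw [hw qy hqypath, hw qz hqzpath]
  have hsup : qy.reverse.support = qz.reverse.support := by rw [hqq]
  rw [hqy, hqz, SimpleGraph.Walk.reverse_concat, SimpleGraph.Walk.reverse_concat,
    SimpleGraph.Walk.support_cons, SimpleGraph.Walk.support_cons,
    SimpleGraph.Walk.support_eq_cons py.reverse, SimpleGraph.Walk.support_eq_cons pz.reverse]
    at hsup
  have : y = z := by
    have := List.head_eq_of_cons_eq (List.tail_eq_of_cons_eq hsup)
    exact this
  exact hyz this

private lemma aux_exists_max [Fintype V] (T : SimpleGraph V) :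
    ∃ F : Finset V, IsMaxDissocSet T F := by
  have hne : ({n | ∃ F : Finset V, IsDissocSet T F ∧ F.card = n} : Set ℕ).Nonempty :=
    ⟨0, ∅, fun v hv => by simp at hv, by simp⟩
  have hbdd : BddAbove {n | ∃ F : Finset V, IsDissocSet T F ∧ F.card = n} := by
    refine ⟨Fintype.card V, fun m hm => ?_⟩
    obtain ⟨F, -, hc⟩ := hm
    rw [← hc, ← Finset.card_univ]
    exact Finset.card_le_card (Finset.subset_univ F)
  obtain ⟨F, hF, hc⟩ := Nat.sSup_mem hne hbdd
  exact ⟨F, hF, hc⟩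

/-- Equality conditions: for an extremal subcubic tree, every vertex outside a maximum
dissociation set has exactly 3 neighbors, all inside the set. -/
private lemma aux_key [Fintype V] (hT : T.IsTree) (hsub : Subcubic T)
    (hpsi : 5 * dissocNum T = 4 * Fintype.card V + 2)
    {F : Finset V} (hF : IsMaxDissocSet T F) :
    ∀ v ∉ F, (T.neighborSet v).ncard = 3 ∧ ∀ u, T.Adj v u → u ∈ F := by
  classical
  set n := Fintype.card V with hn
  set d := Fᶜ.card with hdd
  have hcard : F.card + d = n := by
    rw [hdd, hn]; exact Finset.card_add_card_compl F
  have hFc : 5 * F.card = 4 * n + 2 := by rw [hF.2]; exact hpsi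
  have hF4 : F.card = 4 * d + 2 := by omega
  have hn5 : n = 5 * d + 2 := by omega
  have hnc : ∀ v : V, (T.neighborSet v).ncard = T.degree v := by
    intro v
    rw [Set.ncard_eq_toFinset_card']
    congr 1
  -- degree split
  have hsplit : ∀ v : V, T.degree v =
      (F.filter (fun u => T.Adj v u)).card + (Fᶜ.filter (fun u => T.Adj v u)).card := by
    intro v
    rw [SimpleGraph.degree, SimpleGraph.neighborFinset_eq_filter]
    rw [← Finset.card_union_of_disjoint
      (Finset.disjoint_filter_filter disjoint_compl_right), ← Finset.filter_union,
      Finset.union_compl]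
  have hhand : ∑ v : V, T.degree v = 2 * (n - 1) := by
    rw [SimpleGraph.sum_degrees_eq_twice_card_edges]
    have := hT.card_edgeFinset
    omega
  have hsym : ∑ v ∈ F, (Fᶜ.filter (fun u => T.Adj v u)).card
      = ∑ w ∈ Fᶜ, (F.filter (fun u => T.Adj w u)).card := by
    calc ∑ v ∈ F, (Fᶜ.filter (fun u => T.Adj v u)).card
        = ∑ v ∈ F, ∑ u ∈ Fᶜ, if T.Adj v u then 1 else 0 :=
          Finset.sum_congr rfl fun v _ => Finset.card_filter _ _
      _ = ∑ u ∈ Fᶜ, ∑ v ∈ F, if T.Adj v u then 1 else 0 := Finset.sum_comm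
      _ = ∑ w ∈ Fᶜ, (F.filter (fun u => T.Adj w u)).card := by
          refine Finset.sum_congr rfl fun u _ => ?_
          rw [Finset.card_filter]
          exact Finset.sum_congr rfl fun v _ => if_congr (T.adj_comm v u) rfl rfl
  have hdis : ∀ v ∈ F, (F.filter (fun u => T.Adj v u)).card ≤ 1 := by
    intro v hv
    refine Finset.card_le_one.mpr fun a ha b hb => ?_
    rw [Finset.mem_filter] at ha hb
    exact hF.1 v hv a ha.1 b hb.1 ha.2 hb.2
  have hdeg3 : ∀ v : V, T.degree v ≤ 3 := fun v => by
    have := hsub v; rwa [hnc] at this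
  -- the global count
  have h1 : ∑ v ∈ F, T.degree v + ∑ v ∈ Fᶜ, T.degree v = 2 * (n - 1) := by
    rw [Finset.sum_add_sum_compl]; exact hhand
  have h2 : ∑ v ∈ F, T.degree v = ∑ v ∈ F, (F.filter (fun u => T.Adj v u)).card
      + ∑ w ∈ Fᶜ, (F.filter (fun u => T.Adj w u)).card := by
    rw [← hsym, ← Finset.sum_add_distrib]
    exact Finset.sum_congr rfl fun v _ => hsplit v
  have h3 : ∑ v ∈ Fᶜ, T.degree v = ∑ w ∈ Fᶜ, (F.filter (fun u => T.Adj w u)).card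
      + ∑ w ∈ Fᶜ, (Fᶜ.filter (fun u => T.Adj w u)).card := by
    rw [← Finset.sum_add_distrib]
    exact Finset.sum_congr rfl fun v _ => hsplit v
  have hA : ∑ v ∈ F, (F.filter (fun u => T.Adj v u)).card ≤ F.card := by
    calc ∑ v ∈ F, (F.filter (fun u => T.Adj v u)).card ≤ ∑ _v ∈ F, 1 :=
          Finset.sum_le_sum hdis
      _ = F.card := by simp
  have hB : ∑ v ∈ Fᶜ, T.degree v ≤ 3 * d := by
    calc ∑ v ∈ Fᶜ, T.degree v ≤ ∑ _v ∈ Fᶜ, 3 := Finset.sum_le_sum fun v _ => hdeg3 v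
      _ = 3 * d := by simp only [Finset.sum_const, smul_eq_mul]; omega
  have hC0 : ∑ w ∈ Fᶜ, (Fᶜ.filter (fun u => T.Adj w u)).card = 0 := by omega
  have hSD : ∑ v ∈ Fᶜ, T.degree v = 3 * d := by omega
  -- pointwise consequences
  have hdeg_eq : ∀ v ∈ Fᶜ, T.degree v = 3 := by
    by_contra h
    push_neg at h
    obtain ⟨v, hv, hne⟩ := h
    have hlt : T.degree v < 3 := lt_of_le_of_ne (hdeg3 v) hne
    have := Finset.sum_lt_sum (fun i (_ : i ∈ Fᶜ) => hdeg3 i) ⟨v, hv, hlt⟩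
    rw [hSD] at this
    simp only [Finset.sum_const, smul_eq_mul] at this
    omega
  have heD0 : ∀ v ∈ Fᶜ, (Fᶜ.filter (fun u => T.Adj v u)).card = 0 :=
    fun v hv => (Finset.sum_eq_zero_iff.mp hC0) v hv
  intro v hv
  have hv' : v ∈ Fᶜ := Finset.mem_compl.mpr hv
  refine ⟨by rw [hnc v]; exact hdeg_eq v hv', fun u hadj => ?_⟩
  by_contra hu
  have hmem : u ∈ Fᶜ.filter (fun u => T.Adj v u) :=
    Finset.mem_filter.mpr ⟨Finset.mem_compl.mpr hu, hadj⟩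
  have := heD0 v hv'
  rw [Finset.card_eq_zero] at this
  rw [this] at hmem
  exact absurd hmem (Finset.notMem_empty u)

end Aux

/-- If `T` is a subcubic tree of order `n` with dissociation number `ψ = (4n+2)/5`,
then `T` has exactly one maximum dissociation set. -/
theorem numMaxDissoc_eq_one {V : Type*} [Fintype V] (T : SimpleGraph V)
    (hT : T.IsTree) (hsub : Subcubic T)
    (hpsi : 5 * dissocNum T = 4 * Fintype.card V + 2) :
    numMaxDissoc T = 1 := by
  classical
  obtain ⟨F₀, hF₀⟩ := aux_exists_max T
  have huniq : ∀ F : Finset V, IsMaxDissocSet T F → F = F₀ := by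
    intro F hF
    by_contra hne
    set S : Finset V := (F \ F₀) ∪ (F₀ \ F) with hSdef
    have hSne : S.Nonempty := by
      rw [hSdef]
      by_contra h
      rw [Finset.not_nonempty_iff_eq_empty, Finset.union_eq_empty] at h
      exact hne (Finset.Subset.antisymm
        (Finset.sdiff_eq_empty_iff_subset.mp h.1) (Finset.sdiff_eq_empty_iff_subset.mp h.2))
    refine aux_no_min_deg_two hT S hSne ?_
    intro x hx
    have key₀ := aux_key hT hsub hpsi hF₀
    have keyF := aux_key hT hsub hpsi hF
    have main : ∀ (A B : Finset V), IsMaxDissocSet T A →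
        (∀ v ∉ B, (T.neighborSet v).ncard = 3 ∧ ∀ u, T.Adj v u → u ∈ B) →
        x ∈ A → x ∉ B →
        ∃ y z, (y ∈ B \ A) ∧ (z ∈ B \ A) ∧ y ≠ z ∧ T.Adj x y ∧ T.Adj x z := by
      intro A B hA hkey hxA hxB
      obtain ⟨hdeg, hnbr⟩ := hkey x hxB
      have hnc : (T.neighborSet x).ncard = (Finset.univ.filter (fun u => T.Adj x u)).card := by
        rw [Set.ncard_eq_toFinset_card']
        congr 1
        rw [← SimpleGraph.neighborFinset_eq_filter]
        congr 1
      have h3 : (Finset.univ.filter (fun u => T.Adj x u)).card = 3 := by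
        rw [← hnc]; exact hdeg
      have hle1 : (A.filter (fun u => T.Adj x u)).card ≤ 1 := by
        refine Finset.card_le_one.mpr fun a ha b hb => ?_
        rw [Finset.mem_filter] at ha hb
        exact hA.1 x hxA a ha.1 b hb.1 ha.2 hb.2
      have hsplit : (Finset.univ.filter (fun u => T.Adj x u)).card =
          (A.filter (fun u => T.Adj x u)).card + (Aᶜ.filter (fun u => T.Adj x u)).card := by
        rw [← Finset.card_union_of_disjoint
          (Finset.disjoint_filter_filter disjoint_compl_right), ← Finset.filter_union,
          Finset.union_compl]
      have h2lt : 1 < (Aᶜ.filter (fun u => T.Adj x u)).card := by omega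
      obtain ⟨y, hy, z, hz, hyzne⟩ := Finset.one_lt_card.mp h2lt
      rw [Finset.mem_filter, Finset.mem_compl] at hy hz
      refine ⟨y, z, ?_, ?_, hyzne, hy.2, hz.2⟩
      · exact Finset.mem_sdiff.mpr ⟨hnbr y hy.2, hy.1⟩
      · exact Finset.mem_sdiff.mpr ⟨hnbr z hz.2, hz.1⟩
    rw [hSdef, Finset.mem_union] at hx
    rcases hx with hx | hx
    · rw [Finset.mem_sdiff] at hx
      obtain ⟨y, z, hy, hz, hyz, hxy, hxz⟩ := main F F₀ hF key₀ hx.1 hx.2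
      exact ⟨y, z, Finset.mem_union_right _ hy, Finset.mem_union_right _ hz, hyz, hxy, hxz⟩
    · rw [Finset.mem_sdiff] at hx
      obtain ⟨y, z, hy, hz, hyz, hxy, hxz⟩ := main F₀ F hF₀ keyF hx.1 hx.2
      exact ⟨y, z, Finset.mem_union_left _ hy, Finset.mem_union_left _ hz, hyz, hxy, hxz⟩
  have hset : {F : Finset V | IsMaxDissocSet T F} = {F₀} := by
    ext F
    simp only [Set.mem_setOf_eq, Set.mem_singleton_iff]
    exact ⟨huniq F, fun h => h ▸ hF₀⟩
  rw [numMaxDissoc, hset, Set.ncard_singleton]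
end

section
/- If a tree T is obtained from K₂ by iteratively attaching paths P₅ (where attaching a P₅ to a tree T₀ means adding vertices x,y,z,j,k and edges uz, zy, zj, yx, jk for some vertex u of T₀), and the resulting tree is subcubic of order n, then its dissociation number equals (4n+2)/5. -/
/-- `ArisesFromK2 G S` says that the induced subgraph of `G` on `S` arises from `K₂` by
iteratively attaching copies of `P₅`: attaching a `P₅` at a vertex `u` adds five new vertices
`x, y, z, j, k` and the edges `uz, zy, zj, yx, jk` (and no other edges). -/
inductive ArisesFromK2 {V : Type*} [DecidableEq V] (G : SimpleGraph V) : Finset V → Prop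
  | base (a b : V) (hab : G.Adj a b) : ArisesFromK2 G {a, b}
  | attach (S : Finset V) (u x y z j k : V)
      (hS : ArisesFromK2 G S) (hu : u ∈ S)
      (hx : x ∉ S) (hy : y ∉ S) (hz : z ∉ S) (hj : j ∉ S) (hk : k ∉ S)
      (hcard : ({x, y, z, j, k} : Finset V).card = 5)
      (e1 : G.Adj u z) (e2 : G.Adj z y) (e3 : G.Adj z j) (e4 : G.Adj y x) (e5 : G.Adj j k)
      (honly : ∀ p ∈ ({x, y, z, j, k} : Finset V), ∀ q ∈ S ∪ {x, y, z, j, k}, G.Adj p q →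
        (p = z ∧ q = u) ∨ (p = z ∧ q = y) ∨ (p = z ∧ q = j) ∨ (p = y ∧ q = x) ∨
        (p = j ∧ q = k) ∨ (p = y ∧ q = z) ∨ (p = j ∧ q = z) ∨ (p = x ∧ q = y) ∨
        (p = k ∧ q = j)) :
      ArisesFromK2 G (S ∪ {x, y, z, j, k})

section Aux

variable {V : Type*} [DecidableEq V]

lemma distinct5 {x y z j k : V} (h : ({x,y,z,j,k}:Finset V).card = 5) :
    x≠y ∧ x≠z ∧ x≠j ∧ x≠k ∧ y≠z ∧ y≠j ∧ y≠k ∧ z≠j ∧ z≠k ∧ j≠k := by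
  have c1 : ({k}:Finset V).card = 1 := Finset.card_singleton k
  have c2 := Finset.card_insert_le j ({k}:Finset V)
  have c3 := Finset.card_insert_le z ({j,k}:Finset V)
  have c4 := Finset.card_insert_le y ({z,j,k}:Finset V)
  have hx : x ∉ ({y,z,j,k}:Finset V) := by
    intro hm; rw [Finset.insert_eq_self.mpr hm] at h; omega
  have h4 : ({y,z,j,k}:Finset V).card = 4 := by
    rw [Finset.card_insert_of_notMem hx] at h; omega
  have hy : y ∉ ({z,j,k}:Finset V) := by
    intro hm; rw [Finset.insert_eq_self.mpr hm] at h4; omega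
  have h3 : ({z,j,k}:Finset V).card = 3 := by
    rw [Finset.card_insert_of_notMem hy] at h4; omega
  have hz : z ∉ ({j,k}:Finset V) := by
    intro hm; rw [Finset.insert_eq_self.mpr hm] at h3; omega
  have h2 : ({j,k}:Finset V).card = 2 := by
    rw [Finset.card_insert_of_notMem hz] at h3; omega
  have hj : j ∉ ({k}:Finset V) := by
    intro hm; rw [Finset.insert_eq_self.mpr hm] at h2; omega
  simp only [Finset.mem_insert, Finset.mem_singleton, not_or] at hx hy hz hj
  tauto

lemma upper_bound {G : SimpleGraph V} {S : Finset V} (hS : ArisesFromK2 G S) :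
    ∀ F : Finset V, F ⊆ S → IsDissocSet G F → 5 * F.card ≤ 4 * S.card + 2 := by
  induction hS with
  | base a b hab =>
    intro F hF hd
    have hab2 : ({a,b}:Finset V).card = 2 := by
      rw [Finset.card_insert_of_notMem (by simp [hab.ne]), Finset.card_singleton]
    have : F.card ≤ 2 := hab2 ▸ Finset.card_le_card hF
    rw [hab2]; omega
  | attach S u x y z j k hS hu hx hy hz hj hk hcard e1 e2 e3 e4 e5 honly ih =>
    intro F hF hd
    obtain ⟨-, -, -, -, -, hyj, -, -, -, -⟩ := distinct5 hcard
    have hdisj : Disjoint S ({x,y,z,j,k}:Finset V) := by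
      rw [Finset.disjoint_right]
      intro a ha
      simp only [Finset.mem_insert, Finset.mem_singleton] at ha
      rcases ha with rfl|rfl|rfl|rfl|rfl <;> assumption
    have hcardU : (S ∪ ({x,y,z,j,k}:Finset V)).card = S.card + 5 := by
      rw [Finset.card_union_of_disjoint hdisj, hcard]
    have hFS : IsDissocSet G (F ∩ S) := fun v hv u hu w hw hvu hvw =>
      hd v (Finset.mem_of_mem_inter_left hv) u (Finset.mem_of_mem_inter_left hu)
        w (Finset.mem_of_mem_inter_left hw) hvu hvw
    have h1 := ih (F ∩ S) Finset.inter_subset_right hFS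
    have h2 : (F ∩ ({x,y,z,j,k}:Finset V)).card ≤ 4 := by
      by_contra hcon
      push_neg at hcon
      have heq : F ∩ ({x,y,z,j,k}:Finset V) = {x,y,z,j,k} :=
        Finset.eq_of_subset_of_card_le Finset.inter_subset_right (by omega)
      have hzF : z ∈ F := by
        have : z ∈ F ∩ ({x,y,z,j,k}:Finset V) := by rw [heq]; simp
        exact (Finset.mem_inter.mp this).1
      have hyF : y ∈ F := by
        have : y ∈ F ∩ ({x,y,z,j,k}:Finset V) := by rw [heq]; simp
        exact (Finset.mem_inter.mp this).1
      have hjF : j ∈ F := by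
        have : j ∈ F ∩ ({x,y,z,j,k}:Finset V) := by rw [heq]; simp
        exact (Finset.mem_inter.mp this).1
      exact hyj (hd z hzF y hyF j hjF e2 e3)
    have hsplit : F.card ≤ (F ∩ S).card + (F ∩ ({x,y,z,j,k}:Finset V)).card := by
      have hFeq : F = (F ∩ S) ∪ (F ∩ ({x,y,z,j,k}:Finset V)) := by
        rw [← Finset.inter_union_distrib_left]
        exact (Finset.inter_eq_left.mpr hF).symm
      calc F.card = ((F ∩ S) ∪ (F ∩ ({x,y,z,j,k}:Finset V))).card := by rw [← hFeq]
        _ ≤ _ := Finset.card_union_le _ _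
    rw [hcardU]; omega

lemma lower_bound {G : SimpleGraph V} {S : Finset V} (hS : ArisesFromK2 G S) :
    ∃ F : Finset V, F ⊆ S ∧ IsDissocSet G F ∧ 5 * F.card = 4 * S.card + 2 := by
  induction hS with
  | base a b hab =>
    refine ⟨{a,b}, le_refl _, ?_, ?_⟩
    · intro v hv u hu w hw hvu hvw
      simp only [Finset.mem_insert, Finset.mem_singleton] at hv hu hw
      rcases hu with rfl|rfl <;> rcases hw with rfl|rfl <;>
        first
        | rfl
        | (exfalso; rcases hv with rfl|rfl <;>
            first
            | exact G.irrefl hvu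
            | exact G.irrefl hvw)
    · have : ({a,b}:Finset V).card = 2 := by
        rw [Finset.card_insert_of_notMem (by simp [hab.ne]), Finset.card_singleton]
      rw [this]
  | attach S u x y z j k hS hu hx hy hz hj hk hcard e1 e2 e3 e4 e5 honly ih =>
    obtain ⟨F, hFS, hFd, hFc⟩ := ih
    obtain ⟨hxy, hxz, hxj, hxk, hyz, hyj, hyk, hzj, hzk, hjk⟩ := distinct5 hcard
    have hN4 : ∀ a ∈ ({x,y,j,k}:Finset V), a ∈ ({x,y,z,j,k}:Finset V) := by
      intro a ha
      simp only [Finset.mem_insert, Finset.mem_singleton] at ha ⊢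
      tauto
    have hFN : ∀ a ∈ F, a ∈ S := fun a ha => hFS ha
    have hedge : ∀ p ∈ ({x,y,j,k}:Finset V), ∀ q ∈ F ∪ ({x,y,j,k}:Finset V), G.Adj p q →
        (p = x ∧ q = y) ∨ (p = y ∧ q = x) ∨ (p = j ∧ q = k) ∨ (p = k ∧ q = j) := by
      intro p hp q hq hadj
      have hq' : q ∈ S ∪ ({x,y,z,j,k}:Finset V) := by
        simp only [Finset.mem_union] at hq ⊢
        rcases hq with h|h
        · exact Or.inl (hFN q h)
        · exact Or.inr (hN4 q h)
      have hcases := honly p (hN4 p hp) q hq' hadj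
      have hpz : p ≠ z := by
        simp only [Finset.mem_insert, Finset.mem_singleton] at hp
        rcases hp with rfl|rfl|rfl|rfl
        exacts [hxz, hyz, fun h => hzj h.symm, fun h => hzk h.symm]
      have hqz : q ≠ z := by
        intro hqe
        rw [hqe] at hq
        simp only [Finset.mem_union, Finset.mem_insert, Finset.mem_singleton] at hq
        rcases hq with h|h|h|h|h
        · exact hz (hFN _ h)
        exacts [hxz h.symm, hyz h.symm, hzj h, hzk h]
      rcases hcases with ⟨hp1,hq1⟩|⟨hp1,hq1⟩|⟨hp1,hq1⟩|⟨hp1,hq1⟩|⟨hp1,hq1⟩|⟨hp1,hq1⟩|⟨hp1,hq1⟩|⟨hp1,hq1⟩|⟨hp1,hq1⟩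
      · exact absurd hp1 hpz
      · exact absurd hp1 hpz
      · exact absurd hp1 hpz
      · exact Or.inr (Or.inl ⟨hp1, hq1⟩)
      · exact Or.inr (Or.inr (Or.inl ⟨hp1, hq1⟩))
      · exact absurd hq1 hqz
      · exact absurd hq1 hqz
      · exact Or.inl ⟨hp1, hq1⟩
      · exact Or.inr (Or.inr (Or.inr ⟨hp1, hq1⟩))
    have hnoFE : ∀ v ∈ F, ∀ p ∈ ({x,y,j,k}:Finset V), ¬ G.Adj v p := by
      intro v hv p hp hadj
      rcases hedge p hp v (Finset.mem_union_left _ hv) hadj.symm with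
        ⟨-, he⟩ | ⟨-, he⟩ | ⟨-, he⟩ | ⟨-, he⟩
      exacts [hy (he ▸ hFN v hv), hx (he ▸ hFN v hv), hk (he ▸ hFN v hv), hj (he ▸ hFN v hv)]
    refine ⟨F ∪ {x,y,j,k}, ?_, ?_, ?_⟩
    · intro a ha
      simp only [Finset.mem_union] at ha ⊢
      rcases ha with h|h
      · exact Or.inl (hFN a h)
      · exact Or.inr (hN4 a h)
    · intro v hv u' hu' w hw hvu hvw
      rcases Finset.mem_union.mp hv with hvF|hvN
      · have hu'F : u' ∈ F := by
          rcases Finset.mem_union.mp hu' with h|h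
          · exact h
          · exact absurd hvu (hnoFE v hvF u' h)
        have hwF : w ∈ F := by
          rcases Finset.mem_union.mp hw with h|h
          · exact h
          · exact absurd hvw (hnoFE v hvF w h)
        exact hFd v hvF u' hu'F w hwF hvu hvw
      · have h1 := hedge v hvN u' hu' hvu
        have h2 := hedge v hvN w hw hvw
        rcases h1 with ⟨hv1, hu1⟩|⟨hv1, hu1⟩|⟨hv1, hu1⟩|⟨hv1, hu1⟩ <;>
          rcases h2 with ⟨hv2, hw2⟩|⟨hv2, hw2⟩|⟨hv2, hw2⟩|⟨hv2, hw2⟩ <;>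
            rw [hu1, hw2] <;>
              first
              | rfl
              | exact absurd (hv1.symm.trans hv2) (by assumption)
              | exact absurd (hv2.symm.trans hv1) (by assumption)
    · have hdisjF : Disjoint F ({x,y,j,k}:Finset V) := by
        rw [Finset.disjoint_right]
        intro a ha
        simp only [Finset.mem_insert, Finset.mem_singleton] at ha
        rcases ha with rfl|rfl|rfl|rfl
        exacts [fun h => hx (hFN _ h), fun h => hy (hFN _ h),
          fun h => hj (hFN _ h), fun h => hk (hFN _ h)]
      have hdisjS : Disjoint S ({x,y,z,j,k}:Finset V) := by
        rw [Finset.disjoint_right]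
        intro a ha
        simp only [Finset.mem_insert, Finset.mem_singleton] at ha
        rcases ha with rfl|rfl|rfl|rfl|rfl <;> assumption
      have hc4 : ({x,y,j,k}:Finset V).card = 4 := by
        rw [Finset.card_insert_of_notMem (by simp [hxy, hxj, hxk]),
          Finset.card_insert_of_notMem (by simp [hyj, hyk]),
          Finset.card_insert_of_notMem (by simp [hjk]), Finset.card_singleton]
      rw [Finset.card_union_of_disjoint hdisjF, Finset.card_union_of_disjoint hdisjS,
        hc4, hcard]
      omega

end Aux

/-- If a subcubic tree `T` of order `n` arises from `K₂` by iteratively attaching `P₅`s,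
then its dissociation number equals `(4n+2)/5`. -/
theorem dissocNum_of_arisesFromK2 {V : Type*} [Fintype V] [DecidableEq V] (T : SimpleGraph V)
    (hT : T.IsTree) (hsub : Subcubic T) (harises : ArisesFromK2 T Finset.univ) :
    5 * dissocNum T = 4 * Fintype.card V + 2 := by
  obtain ⟨F, -, hFd, hFc⟩ := lower_bound harises
  rw [Finset.card_univ] at hFc
  have hub : ∀ n ∈ {n | ∃ F : Finset V, IsDissocSet T F ∧ F.card = n}, n ≤ F.card := by
    rintro n ⟨F', hF'd, rfl⟩
    have := upper_bound harises F' (Finset.subset_univ F') hF'd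
    rw [Finset.card_univ] at this
    omega
  have hmem : F.card ∈ {n | ∃ F : Finset V, IsDissocSet T F ∧ F.card = n} := ⟨F, hFd, rfl⟩
  have hs : dissocNum T = F.card :=
    le_antisymm (csSup_le ⟨_, hmem⟩ hub) (le_csSup ⟨F.card, hub⟩ hmem)
  rw [hs]; omega
end
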